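/- arXiv:2202.04707 — 2 statements merged into one kernel-verified Lean document; each statement's English description precedes it below -/
import Mathlib

section
/- If (a_n)_n is an approximately uncorrelated Gaussian ensemble, then (a_n)_n is an approximately uncorrelated triangular scheme; more precisely, it satisfies (AU1) with constants C(ℓ) = #PP(ℓ) (the number of pair partitions of [ℓ]) and (AU2) with sequences C_n^{(ℓ)} = #PP(2ℓ)/n², which are summable over n. -/
open MeasureTheory Filter Finset

noncomputable def esd {n : ℕ} (A : Matrix (Fin n) (Fin n) ℝ) : Measure ℝ :=
  if hA : A.IsHermitian then ((n : ENNReal))⁻¹ • ∑ i : Fin n, Measure.dirac (hA.eigenvalues i)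
  else 0

noncomputable def semicircle : Measure ℝ :=
  MeasureTheory.volume.withDensity fun x => ENNReal.ofReal (Real.sqrt (4 - x ^ 2) / (2 * Real.pi))

/-- Weak convergence in probability of a sequence of random measures to a fixed measure. -/
def WeakInProb {Ω : Type*} [MeasurableSpace Ω] (P : Measure Ω)
    (μ : ℕ → Ω → Measure ℝ) (ν : Measure ℝ) : Prop :=
  ∀ f : BoundedContinuousFunction ℝ ℝ, ∀ ε : ℝ, 0 < ε →
    Tendsto (fun n => P {ω | ε ≤ |(∫ x, f x ∂(μ n ω)) - ∫ x, f x ∂ν|}) atTop (nhds 0)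

/-- Weak convergence almost surely of a sequence of random measures to a fixed measure. -/
def WeakAS {Ω : Type*} [MeasurableSpace Ω] (P : Measure Ω)
    (μ : ℕ → Ω → Measure ℝ) (ν : Measure ℝ) : Prop :=
  ∀ᵐ ω ∂P, ∀ f : BoundedContinuousFunction ℝ ℝ,
    Tendsto (fun n => ∫ x, f x ∂(μ n ω)) atTop (nhds (∫ x, f x ∂ν))

/-- The index pairs `Q 1, …, Q ℓ` are fundamentally different. -/
def FundDiff {n l : ℕ} (Q : Fin l → Fin n × Fin n) : Prop :=
  ∀ i j : Fin l, i ≠ j → ({(Q i).1, (Q i).2} : Finset (Fin n)) ≠ {(Q j).1, (Q j).2}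

/-- The triangular scheme `a` is approximately uncorrelated with constants `C` and
sequences `c`: conditions (AU1) and (AU2). -/
def IsApproxUncorr {Ω : Type*} [MeasurableSpace Ω] (P : Measure Ω)
    (a : (n : ℕ) → Ω → Matrix (Fin n) (Fin n) ℝ) (C : ℕ → ℝ) (c : ℕ → ℕ → ℝ) : Prop :=
  (∀ n (ω : Ω), (a n ω).IsSymm) ∧
  (∀ (n : ℕ) (p q : Fin n), Measurable fun ω => a n ω p q) ∧
  (∀ l : ℕ, Tendsto (fun n => c l n) atTop (nhds 0)) ∧
  (∀ (n l : ℕ) (Q : Fin l → Fin n × Fin n), FundDiff Q →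
    ∀ δ : Fin l → ℕ, (∀ i, 1 ≤ δ i) →
      |∫ ω, ∏ i, a n ω (Q i).1 (Q i).2 ^ δ i ∂P| ≤
        C (∑ i, δ i) / (n : ℝ) ^ ((((Finset.univ.filter fun i => δ i = 1)).card : ℝ) / 2)) ∧
  (∀ (n l : ℕ) (Q : Fin l → Fin n × Fin n), FundDiff Q →
      |(∫ ω, ∏ i, a n ω (Q i).1 (Q i).2 ^ 2 ∂P) - 1| ≤ c l n)

/-- `b` is an `n`-bandwidth. -/
def IsBandwidth (n b : ℕ) : Prop := b = n ∨ (1 ≤ b ∧ b < n ∧ Odd b)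

/-- The index pair `(p,q)` is `b`-relevant. -/
def BRelevant (n b : ℕ) (p q : Fin n) : Prop :=
  b = n ∨ ((p : ℤ) - (q : ℤ)).natAbs ≤ (b - 1) / 2 ∨ n - (b - 1) / 2 ≤ ((p : ℤ) - (q : ℤ)).natAbs

open Classical in
/-- The periodic band matrix with bandwidth `b` based on `A`, normalized by `√b`. -/
noncomputable def bandMat {n : ℕ} (b : ℕ) (A : Matrix (Fin n) (Fin n) ℝ) :
    Matrix (Fin n) (Fin n) ℝ :=
  Matrix.of fun p q => if BRelevant n b p q then A p q / Real.sqrt b else 0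

/-- The number of pair partitions of `[l]`, counted as the number of fixed-point-free
involutions of `Fin l`. -/
noncomputable def numPP (l : ℕ) : ℕ :=
  Nat.card {p : Fin l → Fin l // (∀ i, p (p i) = i) ∧ ∀ i, p i ≠ i}

/-- The family `Y` is jointly Gaussian, centered, with covariance matrix `S`:
every linear combination is a centered real Gaussian with the corresponding variance. -/
def IsJointGaussian {Ω : Type*} [MeasurableSpace Ω] (P : Measure Ω)
    {ι : Type*} [Fintype ι] (Y : ι → Ω → ℝ) (S : ι → ι → ℝ) : Prop :=
  (∀ i, Measurable (Y i)) ∧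
  ∀ cv : ι → ℝ, Measure.map (fun ω => ∑ i, cv i * Y i ω) P =
    ProbabilityTheory.gaussianReal 0 (Real.toNNReal (∑ i, ∑ j, cv i * cv j * S i j))

/-- `a` is an approximately uncorrelated Gaussian ensemble. -/
def IsAUGaussian {Ω : Type*} [MeasurableSpace Ω] (P : Measure Ω)
    (a : (n : ℕ) → Ω → Matrix (Fin n) (Fin n) ℝ) : Prop :=
  (∀ n (ω : Ω), (a n ω).IsSymm) ∧
  ∀ n : ℕ, ∃ S : (Fin n × Fin n) → (Fin n × Fin n) → ℝ,
    -- extension by symmetry in each index pair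
    (∀ p q r s : Fin n, S (p, q) (r, s) = S (q, p) (r, s)) ∧
    (∀ p q r s : Fin n, S (p, q) (r, s) = S (p, q) (s, r)) ∧
    (∀ P1 P2 : Fin n × Fin n, S P1 P2 = S P2 P1) ∧
    -- positive definiteness (on the upper triangle)
    (∀ cv : Fin n × Fin n → ℝ, (∀ p q : Fin n, ¬ p ≤ q → cv (p, q) = 0) → cv ≠ 0 →
      0 < ∑ i, ∑ j, cv i * cv j * S i j) ∧
    -- the entries are jointly Gaussian N(0, S)
    IsJointGaussian P (fun pq ω => a n ω pq.1 pq.2) S ∧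
    (∀ P1 P2 : Fin n × Fin n, S P1 P2 = ∫ ω, a n ω P1.1 P1.2 * a n ω P2.1 P2.2 ∂P) ∧
    -- decay of correlations between fundamentally different pairs
    (∀ P1 P2 : Fin n × Fin n, ({P1.1, P1.2} : Finset (Fin n)) ≠ {P2.1, P2.2} →
      |S P1 P2| ≤ 1 / (n : ℝ)) ∧
    -- unit variances
    (∀ pq : Fin n × Fin n, S pq pq = 1)

/-!
Wick's formula: for a centred Gaussian family `(Y_m)` with covariance `S`, `E[Y_1 ⋯ Y_k]` is the
sum over pair partitions `p` of `∏_{{i, j} ∈ p} S i j`. It follows by polarization: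
`k! y_1 ⋯ y_k = ∑_s (-1)^(k - #s) (∑_{m ∈ s} y_m)^k`, each `∑_{m ∈ s} Y_m` is a real Gaussian of
variance `q s = ∑_{i, j ∈ s} S i j`, whose odd moments vanish and whose `k = 2h`-th moment is
`k! / (2^h h!) · (q s)^h`, and the same alternating sum of `(q s)^h` counts every pair partition
`2^h h!` times (once for each ordering and orientation of its blocks).

For the ensemble, `E ∏ a(P_i)^{δ_i}` is Wick's formula for the family in which `P_i` is repeated
`δ_i` times. A block joining two copies of the same `P_i` contributes `1`, a block joining two
fundamentally different pairs at most `1/n`. Each `i` with `δ_i = 1` lies in a crossing block,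
which gives (AU1); for `δ ≡ 2` every pair partition except the one pairing the two copies of each
`P_i` has at least two crossing blocks, which gives (AU2).
-/

open scoped Nat NNReal

namespace GaussianEnsemble

section Pairings

variable {k : ℕ}

def pairings (k : ℕ) : Finset (Fin k → Fin k) :=
  {p | (∀ i, p (p i) = i) ∧ ∀ i, p i ≠ i}

def lowerEnds (p : Fin k → Fin k) : Finset (Fin k) := {i | i < p i}

def pairingWeight {R : Type*} [CommMonoid R] (T : Fin k → Fin k → R) (p : Fin k → Fin k) : R :=
  ∏ i ∈ lowerEnds p, T i (p i)

@[simp] lemma mem_pairings {p : Fin k → Fin k} :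
    p ∈ pairings k ↔ (∀ i, p (p i) = i) ∧ ∀ i, p i ≠ i := by
  simp [pairings]

@[simp] lemma mem_lowerEnds {p : Fin k → Fin k} {i : Fin k} : i ∈ lowerEnds p ↔ i < p i := by
  simp [lowerEnds]

lemma numPP_eq_card_pairings (k : ℕ) : numPP k = #(pairings k) := by
  classical
  rw [numPP, Nat.card_eq_fintype_card, Fintype.card_subtype, pairings]

lemma two_mul_card_filter_lt {p : Fin k → Fin k} (hp : p ∈ pairings k) {s : Finset (Fin k)}
    (hs : ∀ i ∈ s, p i ∈ s) : 2 * #{i ∈ s | i < p i} = #s := by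
  rw [mem_pairings] at hp
  have hswap : #{i ∈ s | i < p i} = #{i ∈ s | p i < i} := by
    refine Finset.card_nbij' p p (fun i hi => ?_) (fun i hi => ?_)
      (fun i _ => hp.1 i) (fun i _ => hp.1 i) <;>
    · simp only [coe_filter] at hi ⊢
      exact ⟨hs _ hi.1, by rw [hp.1]; exact hi.2⟩
  have hsplit : #{i ∈ s | i < p i} + #{i ∈ s | ¬ i < p i} = #s :=
    Finset.card_filter_add_card_filter_not _
  have hne : {i ∈ s | ¬ i < p i} = {i ∈ s | p i < i} :=
    Finset.filter_congr fun i _ => by rw [not_lt, le_iff_lt_or_eq, or_iff_left (hp.2 i)]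
  rw [hne] at hsplit
  omega

lemma two_mul_card_lowerEnds {p : Fin k → Fin k} (hp : p ∈ pairings k) :
    2 * #(lowerEnds p) = k := by
  simpa [lowerEnds] using two_mul_card_filter_lt hp (s := univ) (fun i _ => mem_univ _)

lemma pairings_eq_empty_of_odd (hk : Odd k) : pairings k = ∅ := by
  refine Finset.eq_empty_of_forall_notMem fun p hp => ?_
  have := two_mul_card_lowerEnds hp
  obtain ⟨m, rfl⟩ := hk
  omega

end Pairings

section Polarization

variable {R : Type*} [CommRing R] {k : ℕ}

lemma sum_neg_one_pow_mul_sum_subset {α : Type*} [Fintype α] (t : α → Finset (Fin k))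
    (w : α → R) :
    ∑ s : Finset (Fin k), (-1) ^ (k - #s) * ∑ x with t x ⊆ s, w x
      = ∑ x with t x = univ, w x := by
  classical
  have hIE := inclusion_exclusion_sum_inf_compl univ (fun i : Fin k => {x | i ∉ t x}) w
  have hlhs : (univ.inf fun i : Fin k => ({x | i ∉ t x} : Finset α)ᶜ)
      = ({x | t x = univ} : Finset α) := by
    ext x; simp [Finset.mem_inf, eq_univ_iff_forall]
  have hrhs : ∀ T : Finset (Fin k), (T.inf fun i => ({x | i ∉ t x} : Finset α))
      = ({x | t x ⊆ Tᶜ} : Finset α) := by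
    intro T; ext x; simp [Finset.mem_inf, Finset.subset_iff]; tauto
  rw [hlhs] at hIE
  rw [hIE, powerset_univ]
  simp_rw [hrhs, zsmul_eq_mul]
  refine Fintype.sum_bijective compl compl_bijective _ _ fun T => ?_
  rw [card_compl, Fintype.card_fin, compl_compl]
  push_cast
  rfl

lemma factorial_mul_prod_eq_sum (y : Fin k → R) :
    (k ! : R) * ∏ m, y m = ∑ s : Finset (Fin k), (-1) ^ (k - #s) * (∑ m ∈ s, y m) ^ k := by
  classical
  have hexpand : ∀ s : Finset (Fin k),
      (∑ m ∈ s, y m) ^ k = ∑ x : Fin k → Fin k with univ.image x ⊆ s, ∏ i, y (x i) := by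
    intro s
    rw [sum_pow']
    exact Finset.sum_congr (by ext x; simp [Finset.image_subset_iff]) fun _ _ => rfl
  have hperm : ∑ x : Fin k → Fin k with univ.image x = univ, ∏ i, y (x i)
      = ∑ σ : Equiv.Perm (Fin k), ∏ i, y (σ i) := by
    symm
    refine Finset.sum_bij (fun σ _ => ⇑σ) (fun σ _ => ?_)
      (fun _ _ _ _ h => Equiv.coe_fn_injective h) (fun x hx => ?_) (fun _ _ => rfl)
    · simp [Finset.image_univ_of_surjective σ.surjective]
    · have hsurj : Function.Surjective x := fun i => by
        simpa using (Finset.ext_iff.mp (Finset.mem_filter.mp hx).2 i).mpr (mem_univ i)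
      exact ⟨Equiv.ofBijective x ⟨Finite.injective_iff_surjective.mpr hsurj, hsurj⟩,
        mem_univ _, rfl⟩
  simp_rw [hexpand]
  rw [sum_neg_one_pow_mul_sum_subset, hperm]
  simp [Equiv.prod_comp, Fintype.card_perm]

end Polarization

section PairPolarization

variable {h k : ℕ}

def endpoints (F : Fin h → Fin k × Fin k) (x : Fin h × Bool) : Fin k :=
  if x.2 then (F x.1).1 else (F x.1).2

lemma bijective_endpoints_iff (hk : k = 2 * h) {F : Fin h → Fin k × Fin k} :
    Function.Bijective (endpoints F) ↔ univ.image (endpoints F) = univ := by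
  rw [Fintype.bijective_iff_surjective_and_card]
  simp [Finset.eq_univ_iff_forall, Function.Surjective, hk, mul_comm]

/-- The pairing with blocks `{(F m).1, (F m).2}` if these partition `Fin k`, junk `id` otherwise. -/
noncomputable def partner (F : Fin h → Fin k × Fin k) : Fin k → Fin k :=
  if hF : Function.Bijective (endpoints F) then
    fun x => endpoints F (Prod.map id not ((Equiv.ofBijective _ hF).symm x))
  else id

lemma partner_endpoints {F : Fin h → Fin k × Fin k} (hF : Function.Bijective (endpoints F))
    (m : Fin h) (b : Bool) : partner F (endpoints F (m, b)) = endpoints F (m, !b) := by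
  rw [partner, dif_pos hF]
  simp [Equiv.ofBijective_symm_apply_apply]

lemma partner_mem_pairings {F : Fin h → Fin k × Fin k}
    (hF : Function.Bijective (endpoints F)) : partner F ∈ pairings k := by
  refine mem_pairings.mpr ⟨fun x => ?_, fun x hx => ?_⟩ <;> obtain ⟨⟨m, b⟩, rfl⟩ := hF.2 x
  · rw [partner_endpoints hF, partner_endpoints hF, Bool.not_not]
  · rw [partner_endpoints hF] at hx
    simpa using hF.1 hx

lemma partner_eq_iff {F : Fin h → Fin k × Fin k} (hF : Function.Bijective (endpoints F))
    {p : Fin k → Fin k} (hp : p ∈ pairings k) :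
    partner F = p ↔ ∀ m, p (F m).1 = (F m).2 := by
  constructor
  · rintro rfl m
    exact partner_endpoints hF m true
  · intro hFp
    funext x
    obtain ⟨⟨m, b⟩, rfl⟩ := hF.2 x
    rw [partner_endpoints hF]
    cases b
    · simp [endpoints, ← hFp, (mem_pairings.mp hp).1]
    · simp [endpoints, hFp]

def ofLowerEnds (p : Fin k → Fin k) (σ : Fin h → Fin k) (e : Fin h → Bool) :
    Fin h → Fin k × Fin k :=
  fun m => if e m then (σ m, p (σ m)) else (p (σ m), σ m)

variable {p : Fin k → Fin k}

lemma min_mem_lowerEnds (hp : p ∈ pairings k) (a : Fin k) : min a (p a) ∈ lowerEnds p := by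
  obtain ⟨hinv, hne⟩ := mem_pairings.mp hp
  rcases lt_or_gt_of_ne (hne a).symm with h | h
  · simpa [min_eq_left h.le] using h
  · simpa [min_eq_right h.le, hinv] using h

lemma image_eq_lowerEnds (hk : k = 2 * h) (hp : p ∈ pairings k) {σ : Fin h → Fin k}
    (hσ : Function.Injective σ) (hσp : ∀ m, σ m ∈ lowerEnds p) :
    univ.image σ = lowerEnds p := by
  refine Finset.eq_of_subset_of_card_le (fun x hx => ?_) ?_
  · obtain ⟨m, -, rfl⟩ := Finset.mem_image.mp hx
    exact hσp m
  · have := two_mul_card_lowerEnds hp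
    rw [Finset.card_image_of_injective _ hσ, Finset.card_univ, Fintype.card_fin]
    omega

lemma card_injective_into_lowerEnds (hk : k = 2 * h) (hp : p ∈ pairings k) :
    #{σ : Fin h → Fin k | Function.Injective σ ∧ ∀ m, σ m ∈ lowerEnds p} = h ! := by
  let e : {σ : Fin h → Fin k // Function.Injective σ ∧ ∀ m, σ m ∈ lowerEnds p}
      ≃ (Fin h ↪ lowerEnds p) :=
    { toFun := fun σ => ⟨fun m => ⟨σ.1 m, σ.2.2 m⟩,
        fun m m' hm => σ.2.1 (congrArg Subtype.val hm)⟩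
      invFun := fun σ => ⟨fun m => σ m, fun m m' hm => σ.injective (Subtype.ext hm),
        fun m => (σ m).2⟩
      left_inv := fun _ => rfl
      right_inv := fun _ => rfl }
  have hcard : Fintype.card (lowerEnds p) = h := by
    have := two_mul_card_lowerEnds hp
    rw [Fintype.card_coe]
    omega
  rw [← Fintype.card_subtype, Fintype.card_congr e, Fintype.card_embedding_eq, hcard,
    Fintype.card_fin, Nat.descFactorial_self]

lemma endpoints_ofLowerEnds (σ : Fin h → Fin k) (e : Fin h → Bool) (m : Fin h) (b : Bool) :
    endpoints (ofLowerEnds p σ e) (m, b) = if b = e m then σ m else p (σ m) := by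
  cases b <;> cases he : e m <;> simp [endpoints, ofLowerEnds, he]

lemma bijective_endpoints_ofLowerEnds (hk : k = 2 * h) (hp : p ∈ pairings k)
    {σ : Fin h → Fin k} (hσ : Function.Injective σ) (hσp : ∀ m, σ m ∈ lowerEnds p)
    (e : Fin h → Bool) : Function.Bijective (endpoints (ofLowerEnds p σ e)) := by
  rw [bijective_endpoints_iff hk, Finset.eq_univ_iff_forall]
  intro x
  have hx := min_mem_lowerEnds hp x
  rw [← image_eq_lowerEnds hk hp hσ hσp] at hx
  obtain ⟨m, -, hm⟩ := Finset.mem_image.mp hx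
  rcases min_choice x (p x) with hmin | hmin <;> rw [hmin] at hm
  · exact Finset.mem_image.mpr ⟨(m, e m), mem_univ _, by simp [endpoints_ofLowerEnds, hm]⟩
  · refine Finset.mem_image.mpr ⟨(m, !e m), mem_univ _, ?_⟩
    simp [endpoints_ofLowerEnds, hm, (mem_pairings.mp hp).1]

lemma ofLowerEnds_min (hp : p ∈ pairings k) {F : Fin h → Fin k × Fin k}
    (hFp : ∀ m, p (F m).1 = (F m).2) :
    ofLowerEnds p (fun m => min (F m).1 (F m).2) (fun m => (F m).1 < (F m).2) = F := by
  obtain ⟨hinv, hfix⟩ := mem_pairings.mp hp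
  funext m
  have hFm := hFp m
  simp only [ofLowerEnds]
  generalize F m = x at hFm ⊢
  obtain ⟨a, b⟩ := x
  simp only at hFm ⊢
  subst hFm
  rcases lt_or_gt_of_ne (hfix a).symm with hlt | hlt
  · simp [hlt, hlt.le]
  · simp [hlt.not_gt, hlt.le, hinv]

lemma sum_filter_eq_sum_ofLowerEnds (hk : k = 2 * h) (hp : p ∈ pairings k) {R : Type*}
    [AddCommMonoid R] (w : (Fin h → Fin k × Fin k) → R) :
    ∑ F with Function.Bijective (endpoints F) ∧ ∀ m, p (F m).1 = (F m).2, w F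
      = ∑ σ with Function.Injective σ ∧ ∀ m, σ m ∈ lowerEnds p,
          ∑ e : Fin h → Bool, w (ofLowerEnds p σ e) := by
  have hinv := (mem_pairings.mp hp).1
  rw [← Finset.sum_product' (f := fun σ e => w (ofLowerEnds p σ e))]
  refine Finset.sum_nbij' (fun F => (fun m => min (F m).1 (F m).2, fun m => (F m).1 < (F m).2))
    (fun x => ofLowerEnds p x.1 x.2) ?_ ?_ ?_ ?_ ?_
  · intro F hF
    obtain ⟨hF, hFp⟩ := (Finset.mem_filter.mp (Finset.mem_coe.mp hF)).2
    refine Finset.mem_coe.mpr (Finset.mem_product.mpr ⟨Finset.mem_filter.mpr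
      ⟨mem_univ _, fun m m' hmm' => ?_, fun m => ?_⟩, mem_univ _⟩)
    · have hmin : ∀ m, ∃ b, min (F m).1 (F m).2 = endpoints F (m, b) := fun m => by
        rcases min_choice (F m).1 (F m).2 with h | h
        exacts [⟨true, h⟩, ⟨false, h⟩]
      obtain ⟨b, hb⟩ := hmin m
      obtain ⟨b', hb'⟩ := hmin m'
      exact congrArg Prod.fst (hF.1 (hb.symm.trans (hmm'.trans hb')))
    · simpa only [← hFp m] using min_mem_lowerEnds hp (F m).1
  · rintro ⟨σ, e⟩ hσe
    obtain ⟨hσ, hσp⟩ := (Finset.mem_filter.mp (Finset.mem_product.mp hσe).1).2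
    refine Finset.mem_coe.mpr (Finset.mem_filter.mpr ⟨mem_univ _,
      bijective_endpoints_ofLowerEnds hk hp hσ hσp e, fun m => ?_⟩)
    cases he : e m <;> simp [ofLowerEnds, he, hinv]
  · intro F hF
    exact ofLowerEnds_min hp (Finset.mem_filter.mp (Finset.mem_coe.mp hF)).2.2
  · rintro ⟨σ, e⟩ hσe
    obtain ⟨hσ, hσp⟩ := (Finset.mem_filter.mp (Finset.mem_product.mp hσe).1).2
    have hlt : ∀ m, σ m < p (σ m) := fun m => mem_lowerEnds.mp (hσp m)
    ext m
    · cases he : e m <;> simp [ofLowerEnds, he, (hlt m).le]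
    · cases he : e m <;> simp [ofLowerEnds, he, hlt m, (hlt m).not_gt]
  · intro F hF
    rw [ofLowerEnds_min hp (Finset.mem_filter.mp hF).2.2]

lemma prod_ofLowerEnds (hk : k = 2 * h) (hp : p ∈ pairings k) {R : Type*} [CommMonoid R]
    {T : Fin k → Fin k → R} (hT : ∀ i j, T i j = T j i) {σ : Fin h → Fin k}
    (hσ : Function.Injective σ) (hσp : ∀ m, σ m ∈ lowerEnds p) (e : Fin h → Bool) :
    ∏ m, T (ofLowerEnds p σ e m).1 (ofLowerEnds p σ e m).2 = pairingWeight T p := by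
  rw [pairingWeight, ← image_eq_lowerEnds hk hp hσ hσp,
    Finset.prod_image fun _ _ _ _ h => hσ h]
  refine Finset.prod_congr rfl fun m _ => ?_
  cases he : e m <;> simp [ofLowerEnds, he, hT (p (σ m))]

lemma sum_prod_of_bijective_endpoints (hk : k = 2 * h) {R : Type*} [CommSemiring R]
    {T : Fin k → Fin k → R} (hT : ∀ i j, T i j = T j i) :
    ∑ F : Fin h → Fin k × Fin k with Function.Bijective (endpoints F),
        ∏ m, T (F m).1 (F m).2 = h ! * 2 ^ h * ∑ p ∈ pairings k, pairingWeight T p := by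
  rw [← Finset.sum_fiberwise_of_maps_to (g := partner) (t := pairings k)
    fun F hF => partner_mem_pairings (Finset.mem_filter.mp hF).2, Finset.mul_sum]
  refine Finset.sum_congr rfl fun p hp => ?_
  rw [Finset.filter_filter,
    Finset.filter_congr fun F _ => and_congr_right fun hF => partner_eq_iff hF hp,
    sum_filter_eq_sum_ofLowerEnds hk hp,
    Finset.sum_congr rfl fun σ hσ => Finset.sum_congr rfl fun e _ =>
      prod_ofLowerEnds hk hp hT (Finset.mem_filter.mp hσ).2.1 (Finset.mem_filter.mp hσ).2.2 e]
  simp only [Finset.sum_const, Finset.card_univ, Fintype.card_fun, Fintype.card_bool,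
    Fintype.card_fin, card_injective_into_lowerEnds hk hp, nsmul_eq_mul]
  push_cast
  ring

theorem sum_neg_one_pow_mul_sum_sum_pow (hk : k = 2 * h) {R : Type*} [CommRing R]
    {T : Fin k → Fin k → R} (hT : ∀ i j, T i j = T j i) :
    ∑ s : Finset (Fin k), (-1) ^ (k - #s) * (∑ i ∈ s, ∑ j ∈ s, T i j) ^ h
      = h ! * 2 ^ h * ∑ p ∈ pairings k, pairingWeight T p := by
  have hexpand : ∀ s : Finset (Fin k), (∑ i ∈ s, ∑ j ∈ s, T i j) ^ h
      = ∑ F : Fin h → Fin k × Fin k with univ.image (endpoints F) ⊆ s,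
          ∏ m, T (F m).1 (F m).2 := by
    intro s
    rw [← Finset.sum_product' (f := T), sum_pow']
    exact Finset.sum_congr (by ext F; simp [Finset.image_subset_iff, endpoints, and_comm])
      fun _ _ => rfl
  simp_rw [hexpand]
  rw [sum_neg_one_pow_mul_sum_subset, ← sum_prod_of_bijective_endpoints hk hT]
  exact Finset.sum_congr (Finset.filter_congr fun F _ => (bijective_endpoints_iff hk).symm)
    fun _ _ => rfl

end PairPolarization

section GaussianMoments

open ProbabilityTheory Real

lemma integral_pow_add_two_mul_exp_neg_mul_sq {b : ℝ} (hb : 0 < b) (m : ℕ) :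
    ∫ x : ℝ, x ^ (m + 2) * exp (-b * x ^ 2)
      = (m + 1) / (2 * b) * ∫ x : ℝ, x ^ m * exp (-b * x ^ 2) := by
  have hint : ∀ j : ℕ, Integrable fun x : ℝ => x ^ j * exp (-b * x ^ 2) := fun j => by
    simpa [Real.rpow_natCast] using integrable_rpow_mul_exp_neg_mul_sq hb (s := j)
      (by linarith [(j.cast_nonneg : (0 : ℝ) ≤ j)])
  have hu : ∀ x : ℝ, HasDerivAt (fun x : ℝ => x ^ (m + 1)) ((m + 1) * x ^ m) x := fun x => by
    simpa using hasDerivAt_pow (m + 1) x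
  have hv : ∀ x : ℝ, HasDerivAt (fun x : ℝ => -(2 * b)⁻¹ * exp (-b * x ^ 2))
      (x * exp (-b * x ^ 2)) x := fun x => by
    have h := (((hasDerivAt_pow 2 x).const_mul (-b)).exp).const_mul (-(2 * b)⁻¹)
    refine h.congr_deriv ?_
    field_simp
    ring
  have hparts := integral_mul_deriv_eq_deriv_mul_of_integrable (fun x _ => hu x)
    (fun x _ => hv x)
    ((hint (m + 2)).congr (ae_of_all _ fun x => by simp only [Pi.mul_apply]; ring))
    (((hint m).const_mul ((m + 1) * -(2 * b)⁻¹)).congr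
      (ae_of_all _ fun x => by simp only [Pi.mul_apply]; ring))
    (((hint (m + 1)).const_mul (-(2 * b)⁻¹)).congr
      (ae_of_all _ fun x => by simp only [Pi.mul_apply]; ring))
  have hlhs : (fun x : ℝ => x ^ (m + 2) * exp (-b * x ^ 2))
      = fun x => x ^ (m + 1) * (x * exp (-b * x ^ 2)) := by
    funext x; ring
  have hrhs : (fun x : ℝ => (m + 1) * x ^ m * (-(2 * b)⁻¹ * exp (-b * x ^ 2)))
      = fun x => -((m + 1) / (2 * b)) * (x ^ m * exp (-b * x ^ 2)) := by
    funext x; ring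
  rw [hlhs, hparts, hrhs, integral_const_mul]
  ring

lemma integral_pow_add_two_gaussianReal (v : ℝ≥0) (m : ℕ) :
    ∫ x, x ^ (m + 2) ∂gaussianReal 0 v = (m + 1) * v * ∫ x, x ^ m ∂gaussianReal 0 v := by
  rcases eq_or_ne v 0 with rfl | hv
  · simp [gaussianReal_zero_var]
  have hb : 0 < (2 * (v : ℝ))⁻¹ := by positivity
  have hdensity : ∀ j : ℕ, ∫ x, x ^ j ∂gaussianReal 0 v
      = (√(2 * π * v))⁻¹ * ∫ x : ℝ, x ^ j * exp (-(2 * (v : ℝ))⁻¹ * x ^ 2) := fun j => by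
    rw [integral_gaussianReal_eq_integral_smul hv, ← integral_const_mul]
    congr 1
    funext x
    rw [gaussianPDFReal, smul_eq_mul]
    ring_nf
  rw [hdensity, hdensity, integral_pow_add_two_mul_exp_neg_mul_sq hb]
  field_simp

lemma integral_pow_gaussianReal_of_odd (v : ℝ≥0) {k : ℕ} (hk : Odd k) :
    ∫ x, x ^ k ∂gaussianReal 0 v = 0 := by
  obtain ⟨j, rfl⟩ := hk
  induction j with
  | zero => simp
  | succ j ih => rw [show 2 * (j + 1) + 1 = 2 * j + 1 + 2 by ring,
      integral_pow_add_two_gaussianReal, ih, mul_zero]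

lemma two_pow_mul_factorial_mul_integral_pow_gaussianReal (v : ℝ≥0) (h : ℕ) :
    2 ^ h * h ! * ∫ x, x ^ (2 * h) ∂gaussianReal 0 v = (2 * h) ! * (v : ℝ) ^ h := by
  induction h with
  | zero => simp
  | succ h ih =>
    rw [show 2 * (h + 1) = 2 * h + 2 by ring, integral_pow_add_two_gaussianReal,
      Nat.factorial_succ (2 * h + 1), Nat.factorial_succ (2 * h), Nat.factorial_succ h]
    push_cast
    linear_combination (2 * ((h : ℝ) + 1) * (2 * h + 1) * v) * ih

end GaussianMoments

lemma sum_sum_fiberwise_mul {κ ι R : Type*} [Fintype κ] [Fintype ι] [DecidableEq ι]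
    [CommSemiring R] (g : κ → ι) (c : κ → R) (f : ι → R) :
    ∑ i, (∑ m with g m = i, c m) * f i = ∑ m, c m * f (g m) := by
  simp_rw [Finset.sum_mul]
  rw [← Finset.sum_fiberwise univ g fun m => c m * f (g m)]
  exact Finset.sum_congr rfl fun i _ => Finset.sum_congr rfl fun m hm => by
    rw [(Finset.mem_filter.mp hm).2]

section MultiIndex

variable {l : ℕ} (δ : Fin l → ℕ)

/-- The index `i` owning the position `m` when `Fin (∑ i, δ i)` is cut into consecutive blocks
of lengths `δ i`. -/
def owner (m : Fin (∑ i, δ i)) : Fin l := (finSigmaFinEquiv.symm m).1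

@[simp] lemma owner_finSigmaFinEquiv (x : (i : Fin l) × Fin (δ i)) :
    owner δ (finSigmaFinEquiv x) = x.1 := by
  simp [owner]

lemma prod_owner {M : Type*} [CommMonoid M] (f : Fin l → M) :
    ∏ m, f (owner δ m) = ∏ i, f i ^ δ i := by
  rw [← finSigmaFinEquiv.prod_comp, ← Finset.univ_sigma_univ, Finset.prod_sigma]
  simp

lemma eq_of_owner_eq {δ : Fin l → ℕ} {i : Fin l} (hi : δ i = 1) {m m' : Fin (∑ i, δ i)}
    (hm : owner δ m = i) (hm' : owner δ m' = i) : m = m' := by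
  obtain ⟨⟨j, x⟩, rfl⟩ := finSigmaFinEquiv.surjective m
  obtain ⟨⟨j', x'⟩, rfl⟩ := finSigmaFinEquiv.surjective m'
  simp only [owner_finSigmaFinEquiv] at hm hm'
  subst hm hm'
  congr
  ext
  have := x.isLt
  have := x'.isLt
  omega

end MultiIndex

end GaussianEnsemble

namespace IsJointGaussian

open ProbabilityTheory GaussianEnsemble

variable {Ω : Type*} [MeasurableSpace Ω] {P : Measure Ω} {ι : Type*} [Fintype ι]
  {Y : ι → Ω → ℝ} {S : ι → ι → ℝ}

lemma comp (hY : IsJointGaussian P Y S) {κ : Type*} [Fintype κ] (g : κ → ι) :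
    IsJointGaussian P (fun m => Y (g m)) (fun m m' => S (g m) (g m')) := by
  classical
  refine ⟨fun m => hY.1 (g m), fun cv => ?_⟩
  let c : ι → ℝ := fun i => ∑ m with g m = i, cv m
  have hsum : (fun ω => ∑ m, cv m * Y (g m) ω) = fun ω => ∑ i, c i * Y i ω := by
    funext ω
    exact (sum_sum_fiberwise_mul g cv fun i => Y i ω).symm
  have hquad : ∑ m, ∑ m', cv m * cv m' * S (g m) (g m') = ∑ i, ∑ j, c i * c j * S i j := by
    simp_rw [mul_assoc, ← Finset.mul_sum]
    rw [← sum_sum_fiberwise_mul g cv fun i => ∑ m', cv m' * S i (g m')]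
    simp_rw [← sum_sum_fiberwise_mul g cv (S _)]
    rfl
  rw [hsum, hquad]
  exact hY.2 c

lemma map_sum (hY : IsJointGaussian P Y S) (s : Finset ι) :
    P.map (fun ω => ∑ i ∈ s, Y i ω) = gaussianReal 0 (∑ i ∈ s, ∑ j ∈ s, S i j).toNNReal := by
  classical
  have h := hY.2 fun i => if i ∈ s then 1 else 0
  simp only [ite_mul, one_mul, zero_mul, mul_ite, mul_one, mul_zero] at h
  simpa only [Finset.sum_ite_mem, Finset.univ_inter, Finset.sum_ite_irrel,
    Finset.sum_const_zero] using h

lemma measurable_sum (hY : IsJointGaussian P Y S) (s : Finset ι) :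
    Measurable fun ω => ∑ i ∈ s, Y i ω :=
  Finset.measurable_sum s fun i _ => hY.1 i

lemma integrable_sum_pow (hY : IsJointGaussian P Y S) (s : Finset ι) (j : ℕ) :
    Integrable (fun ω => (∑ i ∈ s, Y i ω) ^ j) P := by
  have h : Integrable (fun x : ℝ => x ^ j) (P.map fun ω => ∑ i ∈ s, Y i ω) := by
    rw [hY.map_sum s]
    exact integrable_pow_of_mem_interior_integrableExpSet (by simp) j
  exact (integrable_map_measure (continuous_pow j).aestronglyMeasurable
    (hY.measurable_sum s).aemeasurable).mp h

lemma integral_sum_pow (hY : IsJointGaussian P Y S) (s : Finset ι) (j : ℕ) :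
    ∫ ω, (∑ i ∈ s, Y i ω) ^ j ∂P
      = ∫ x, x ^ j ∂gaussianReal 0 (∑ i ∈ s, ∑ j ∈ s, S i j).toNNReal := by
  rw [← hY.map_sum s, integral_map (hY.measurable_sum s).aemeasurable
    (continuous_pow j).aestronglyMeasurable]

lemma integrable_mul (hY : IsJointGaussian P Y S) (i j : ι) :
    Integrable (fun ω => Y i ω * Y j ω) P := by
  have hL2 : ∀ i, MemLp (Y i) 2 P := fun i => by
    refine (memLp_two_iff_integrable_sq (hY.1 i).aestronglyMeasurable).mpr ?_
    simpa using hY.integrable_sum_pow {i} 2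
  exact (hL2 i).integrable_mul (hL2 j)

lemma sum_sum_nonneg (hY : IsJointGaussian P Y S) (hS : ∀ i j, S i j = ∫ ω, Y i ω * Y j ω ∂P)
    (s : Finset ι) : 0 ≤ ∑ i ∈ s, ∑ j ∈ s, S i j := by
  have hsq : ∫ ω, (∑ i ∈ s, Y i ω) ^ 2 ∂P = ∑ i ∈ s, ∑ j ∈ s, S i j := by
    simp_rw [sq, Finset.sum_mul_sum, hS]
    rw [integral_finsetSum _ fun i _ => integrable_finsetSum _ fun j _ => hY.integrable_mul i j]
    exact Finset.sum_congr rfl fun i _ =>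
      integral_finsetSum _ fun j _ => hY.integrable_mul i j
  rw [← hsq]
  exact integral_nonneg fun ω => sq_nonneg _

theorem integral_prod {k : ℕ} {Y : Fin k → Ω → ℝ} {S : Fin k → Fin k → ℝ}
    (hY : IsJointGaussian P Y S) (hS : ∀ i j, S i j = ∫ ω, Y i ω * Y j ω ∂P) :
    ∫ ω, ∏ m, Y m ω ∂P = ∑ p ∈ pairings k, pairingWeight S p := by
  have hpolar : (k ! : ℝ) * ∫ ω, ∏ m, Y m ω ∂P
      = ∑ s : Finset (Fin k), (-1) ^ (k - #s) *
          ∫ x, x ^ k ∂gaussianReal 0 (∑ i ∈ s, ∑ j ∈ s, S i j).toNNReal := by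
    simp_rw [← hY.integral_sum_pow, ← integral_const_mul, factorial_mul_prod_eq_sum]
    exact integral_finsetSum _ fun s _ => (hY.integrable_sum_pow s k).const_mul _
  rcases Nat.even_or_odd k with ⟨h, hk⟩ | hk
  · replace hk : k = 2 * h := by omega
    have hmoment : ∀ s : Finset (Fin k),
        2 ^ h * h ! * ∫ x, x ^ k ∂gaussianReal 0 (∑ i ∈ s, ∑ j ∈ s, S i j).toNNReal
          = k ! * (∑ i ∈ s, ∑ j ∈ s, S i j) ^ h := fun s => by
      have h2h := two_pow_mul_factorial_mul_integral_pow_gaussianReal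
        (∑ i ∈ s, ∑ j ∈ s, S i j).toNNReal h
      rwa [← hk, Real.coe_toNNReal _ (hY.sum_sum_nonneg hS s)] at h2h
    have hsymm : ∀ i j, S i j = S j i := fun i j => by simp_rw [hS, mul_comm]
    have hk0 : (k ! : ℝ) ≠ 0 := by positivity
    have h0 : (2 ^ h * h ! : ℝ) ≠ 0 := by positivity
    apply mul_left_cancel₀ (mul_ne_zero hk0 h0)
    calc (k ! * (2 ^ h * h !) : ℝ) * ∫ ω, ∏ m, Y m ω ∂P
        = ∑ s : Finset (Fin k), (-1) ^ (k - #s) *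
            (2 ^ h * h ! * ∫ x, x ^ k ∂gaussianReal 0 (∑ i ∈ s, ∑ j ∈ s, S i j).toNNReal) := by
          rw [mul_comm (k ! : ℝ), mul_assoc, hpolar, Finset.mul_sum]
          exact Finset.sum_congr rfl fun s _ => by ring
      _ = k ! * ∑ s : Finset (Fin k), (-1) ^ (k - #s) * (∑ i ∈ s, ∑ j ∈ s, S i j) ^ h := by
          simp_rw [hmoment, Finset.mul_sum]
          exact Finset.sum_congr rfl fun s _ => by ring
      _ = (k ! * (2 ^ h * h !) : ℝ) * ∑ p ∈ pairings k, pairingWeight S p := by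
          rw [sum_neg_one_pow_mul_sum_sum_pow hk hsymm]
          ring
  · rw [pairings_eq_empty_of_odd hk, Finset.sum_empty]
    simp_rw [integral_pow_gaussianReal_of_odd _ hk, mul_zero, Finset.sum_const_zero] at hpolar
    exact (mul_eq_zero.mp hpolar).resolve_left (by positivity)

theorem integral_prod_pow (hY : IsJointGaussian P Y S)
    (hS : ∀ i j, S i j = ∫ ω, Y i ω * Y j ω ∂P) {l : ℕ} (Q : Fin l → ι) (δ : Fin l → ℕ) :
    ∫ ω, ∏ i, Y (Q i) ω ^ δ i ∂P
      = ∑ p ∈ pairings (∑ i, δ i),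
          pairingWeight (fun m m' => S (Q (owner δ m)) (Q (owner δ m'))) p := by
  simp_rw [← prod_owner δ fun i => Y (Q i) _]
  exact (hY.comp fun m => Q (owner δ m)).integral_prod fun _ _ => hS _ _

end IsJointGaussian

namespace GaussianEnsemble

section Crossing

variable {k l : ℕ}

def crossing (g : Fin k → Fin l) (p : Fin k → Fin k) : Finset (Fin k) := {m | g (p m) ≠ g m}

lemma two_mul_card_crossing_lowerEnds {p : Fin k → Fin k} (hp : p ∈ pairings k)
    (g : Fin k → Fin l) :
    2 * #{i ∈ crossing g p | i < p i} = #(crossing g p) :=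
  two_mul_card_filter_lt hp fun m hm => by
    simpa [crossing, (mem_pairings.mp hp).1, eq_comm] using hm

variable {n : ℕ} {S : Fin n × Fin n → Fin n × Fin n → ℝ}

lemma abs_pairingWeight_le
    (hdecay : ∀ P1 P2 : Fin n × Fin n, ({P1.1, P1.2} : Finset (Fin n)) ≠ {P2.1, P2.2} →
      |S P1 P2| ≤ 1 / (n : ℝ))
    (hunit : ∀ pq : Fin n × Fin n, S pq pq = 1) {Q : Fin l → Fin n × Fin n} (hQ : FundDiff Q)
    (g : Fin k → Fin l) (p : Fin k → Fin k) :
    |pairingWeight (fun m m' => S (Q (g m)) (Q (g m'))) p|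
      ≤ ((n : ℝ)⁻¹) ^ #{i ∈ crossing g p | i < p i} := by
  have hfilter : {i ∈ crossing g p | i < p i} = {i ∈ lowerEnds p | g (p i) ≠ g i} := by
    ext i; simp [crossing, and_comm]
  rw [pairingWeight, Finset.abs_prod, hfilter, ← Finset.prod_filter_mul_prod_filter_not
    (lowerEnds p) fun i => g (p i) ≠ g i]
  calc _ ≤ (∏ _i ∈ lowerEnds p with g (p _i) ≠ g _i, (n : ℝ)⁻¹) * 1 := by
        refine mul_le_mul (Finset.prod_le_prod (fun _ _ => abs_nonneg _) fun i hi => ?_)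
          (Finset.prod_le_one (fun _ _ => abs_nonneg _) fun i hi => ?_)
          (Finset.prod_nonneg fun _ _ => abs_nonneg _)
          (Finset.prod_nonneg fun _ _ => by positivity)
        · rw [← one_div]
          exact hdecay _ _ (hQ _ _ (Finset.mem_filter.mp hi).2.symm)
        · rw [not_not.mp (Finset.mem_filter.mp hi).2, hunit, abs_one]
    _ = _ := by rw [Finset.prod_const, mul_one]

lemma card_filter_eq_one_le_card_crossing {δ : Fin l → ℕ} (hδ : ∀ i, 1 ≤ δ i)
    {p : Fin (∑ i, δ i) → Fin (∑ i, δ i)} (hp : p ∈ pairings (∑ i, δ i)) :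
    #{i | δ i = 1} ≤ #(crossing (owner δ) p) := by
  refine Finset.card_le_card_of_injOn (fun i => finSigmaFinEquiv ⟨i, ⟨0, hδ i⟩⟩)
    (fun i hi => ?_) fun i _ j _ hij => congrArg Sigma.fst (finSigmaFinEquiv.injective hij)
  simp only [crossing, coe_filter, Finset.mem_univ, true_and]
  intro hown
  rw [owner_finSigmaFinEquiv] at hown
  exact (mem_pairings.mp hp).2 _ (eq_of_owner_eq (Finset.mem_filter.mp hi).2 hown
    (owner_finSigmaFinEquiv δ ⟨i, ⟨0, hδ i⟩⟩))

lemma inv_pow_le_one_div_rpow {M c : ℕ} (h : M ≤ 2 * c) (n : ℕ) :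
    ((n : ℝ)⁻¹) ^ c ≤ 1 / (n : ℝ) ^ ((M : ℝ) / 2) := by
  rcases Nat.eq_zero_or_pos n with rfl | hn
  · rcases Nat.eq_zero_or_pos M with rfl | hM
    · simp [pow_le_one₀]
    · rw [Nat.cast_zero, Real.zero_rpow (by positivity), inv_zero, zero_pow (by omega), div_zero]
  · rw [one_div, ← Real.rpow_neg (Nat.cast_nonneg n), inv_pow, ← Real.rpow_natCast,
      ← Real.rpow_neg (Nat.cast_nonneg n)]
    exact Real.rpow_le_rpow_of_exponent_le (by exact_mod_cast hn) (by
      have : (M : ℝ) ≤ 2 * c := by exact_mod_cast h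
      linarith)

end Crossing

section Diagonal

variable {l : ℕ}

/-- The pairing that matches the two positions owned by each `i : Fin l`. -/
def diagPairing (l : ℕ) (m : Fin (∑ _i : Fin l, 2)) : Fin (∑ _i : Fin l, 2) :=
  finSigmaFinEquiv ⟨(finSigmaFinEquiv.symm m).1, Fin.rev (finSigmaFinEquiv.symm m).2⟩

@[simp] lemma diagPairing_finSigmaFinEquiv (x : (_ : Fin l) × Fin 2) :
    diagPairing l (finSigmaFinEquiv x) = finSigmaFinEquiv ⟨x.1, Fin.rev x.2⟩ := by
  simp [diagPairing]

@[simp] lemma owner_diagPairing (m : Fin (∑ _i : Fin l, 2)) :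
    owner (fun _ => 2) (diagPairing l m) = owner (fun _ => 2) m := by
  obtain ⟨x, rfl⟩ := finSigmaFinEquiv.surjective m
  simp

lemma diagPairing_mem_pairings : diagPairing l ∈ pairings (∑ _i : Fin l, 2) := by
  refine mem_pairings.mpr ⟨fun m => ?_, fun m => ?_⟩ <;>
    obtain ⟨⟨i, j⟩, rfl⟩ := finSigmaFinEquiv.surjective m
  · simp
  · simp only [diagPairing_finSigmaFinEquiv, ne_eq, EmbeddingLike.apply_eq_iff_eq,
      Sigma.mk.injEq, heq_eq_eq, true_and]
    intro h
    have := congrArg Fin.val h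
    simp only [Fin.val_rev] at this
    omega

lemma eq_diagPairing_of_owner_eq {m x : Fin (∑ _i : Fin l, 2)}
    (hown : owner (fun _ => 2) x = owner (fun _ => 2) m) (hne : x ≠ m) :
    x = diagPairing l m := by
  obtain ⟨⟨i, j⟩, rfl⟩ := finSigmaFinEquiv.surjective m
  obtain ⟨⟨i', j'⟩, rfl⟩ := finSigmaFinEquiv.surjective x
  simp only [owner_finSigmaFinEquiv] at hown
  subst hown
  simp only [ne_eq, EmbeddingLike.apply_eq_iff_eq, Sigma.mk.injEq, heq_eq_eq, true_and,
    diagPairing_finSigmaFinEquiv] at hne ⊢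
  ext
  have := Fin.val_ne_of_ne hne
  simp only [Fin.val_rev]
  omega

lemma two_le_card_crossing {p : Fin (∑ _i : Fin l, 2) → Fin (∑ _i : Fin l, 2)}
    (hp : p ∈ pairings _) (hne : p ≠ diagPairing l) :
    2 ≤ #{i ∈ crossing (owner fun _ => 2) p | i < p i} := by
  set g := owner fun _ : Fin l => 2
  have hg : ∀ x, g (diagPairing l x) = g x := owner_diagPairing
  obtain ⟨hinv, hfix⟩ := mem_pairings.mp hp
  obtain ⟨m, hm⟩ : ∃ m, g (p m) ≠ g m := by
    by_contra! h
    exact hne (funext fun m => eq_diagPairing_of_owner_eq (h m) (hfix m))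
  have hm' : g (p (diagPairing l m)) ≠ g (diagPairing l m) := by
    intro h
    by_cases hpm : p (diagPairing l m) = m
    · exact hm (by rw [← hpm, hinv]; exact h.symm)
    · exact hfix _ (eq_diagPairing_of_owner_eq (h.trans (hg m)) hpm)
  -- `m`, `p m` and the twin of `m` are three crossing positions, and `#(crossing g p)` is even.
  have hcard : #({m, p m, diagPairing l m} : Finset _) = 3 := by
    refine Finset.card_eq_three.mpr ⟨m, p m, diagPairing l m, (hfix m).symm, fun h => ?_,
      fun h => hm (by rw [h, hg]), rfl⟩
    exact (mem_pairings.mp diagPairing_mem_pairings).2 m h.symm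
  have hsub : ({m, p m, diagPairing l m} : Finset _) ⊆ crossing g p := by
    intro x hx
    simp only [Finset.mem_insert, Finset.mem_singleton] at hx
    simp only [crossing, Finset.mem_filter, Finset.mem_univ, true_and]
    rcases hx with rfl | rfl | rfl
    · exact hm
    · rw [hinv]; exact hm.symm
    · exact hm'
  have := Finset.card_le_card hsub
  have := two_mul_card_crossing_lowerEnds hp g
  omega

end Diagonal

section Bounds

variable {Ω : Type*} [MeasurableSpace Ω] {P : Measure Ω} {n l : ℕ}
  {Y : Fin n × Fin n → Ω → ℝ} {S : Fin n × Fin n → Fin n × Fin n → ℝ}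
  {Q : Fin l → Fin n × Fin n}

theorem abs_integral_prod_pow_le (hY : IsJointGaussian P Y S)
    (hS : ∀ i j, S i j = ∫ ω, Y i ω * Y j ω ∂P)
    (hdecay : ∀ P1 P2 : Fin n × Fin n, ({P1.1, P1.2} : Finset (Fin n)) ≠ {P2.1, P2.2} →
      |S P1 P2| ≤ 1 / (n : ℝ))
    (hunit : ∀ pq : Fin n × Fin n, S pq pq = 1) (hQ : FundDiff Q)
    {δ : Fin l → ℕ} (hδ : ∀ i, 1 ≤ δ i) :
    |∫ ω, ∏ i, Y (Q i) ω ^ δ i ∂P|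
      ≤ numPP (∑ i, δ i) / (n : ℝ) ^ ((#{i | δ i = 1} : ℝ) / 2) := by
  rw [hY.integral_prod_pow hS Q δ, numPP_eq_card_pairings, ← mul_one_div, ← nsmul_eq_mul,
    ← Finset.sum_const]
  refine (Finset.abs_sum_le_sum_abs _ _).trans (Finset.sum_le_sum fun p hp => ?_)
  refine (abs_pairingWeight_le hdecay hunit hQ _ p).trans (inv_pow_le_one_div_rpow ?_ n)
  have := card_filter_eq_one_le_card_crossing hδ hp
  have := two_mul_card_crossing_lowerEnds hp (owner δ)
  omega

theorem abs_integral_prod_sq_sub_one_le (hY : IsJointGaussian P Y S)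
    (hS : ∀ i j, S i j = ∫ ω, Y i ω * Y j ω ∂P)
    (hdecay : ∀ P1 P2 : Fin n × Fin n, ({P1.1, P1.2} : Finset (Fin n)) ≠ {P2.1, P2.2} →
      |S P1 P2| ≤ 1 / (n : ℝ))
    (hunit : ∀ pq : Fin n × Fin n, S pq pq = 1) (hQ : FundDiff Q) :
    |∫ ω, ∏ i, Y (Q i) ω ^ 2 ∂P - 1| ≤ numPP (2 * l) / (n : ℝ) ^ 2 := by
  have hint := hY.integral_prod_pow hS Q fun _ => 2
  have hdiag : pairingWeight (fun m m' => S (Q (owner (fun _ => 2) m)) (Q (owner _ m')))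
      (diagPairing l) = 1 :=
    Finset.prod_eq_one fun m _ => by simp only [owner_diagPairing, hunit]
  have hk : ∑ _i : Fin l, 2 = 2 * l := by simp [mul_comm]
  rw [hint, ← Finset.add_sum_erase _ _ diagPairing_mem_pairings, hdiag, add_sub_cancel_left,
    numPP_eq_card_pairings, ← hk, div_eq_mul_inv, ← inv_pow]
  calc _ ≤ ∑ p ∈ (pairings _).erase (diagPairing l), ((n : ℝ)⁻¹) ^ 2 := by
        refine (Finset.abs_sum_le_sum_abs _ _).trans (Finset.sum_le_sum fun p hp => ?_)
        obtain ⟨hne, hp⟩ := Finset.mem_erase.mp hp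
        exact (abs_pairingWeight_le hdecay hunit hQ _ p).trans (pow_le_pow_of_le_one
          (by positivity) (Nat.cast_inv_le_one n) (two_le_card_crossing hp hne))
    _ ≤ _ := by
        rw [Finset.sum_const, nsmul_eq_mul]
        gcongr
        exact Finset.erase_subset _ _

end Bounds

end GaussianEnsemble

open GaussianEnsemble

theorem stmt3_general {Ω : Type*} [MeasurableSpace Ω] (P : Measure Ω)
    (a : (n : ℕ) → Ω → Matrix (Fin n) (Fin n) ℝ) (hG : IsAUGaussian P a) :
    IsApproxUncorr P a (fun l => (numPP l : ℝ)) (fun l n => (numPP (2 * l) : ℝ) / (n : ℝ) ^ 2) ∧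
    ∀ l : ℕ, Summable fun n : ℕ => (numPP (2 * l) : ℝ) / (n : ℝ) ^ 2 := by
  have hsum (l : ℕ) : Summable fun n : ℕ => (numPP (2 * l) : ℝ) / (n : ℝ) ^ 2 := by
    simp_rw [div_eq_mul_one_div (numPP (2 * l) : ℝ)]
    exact (Real.summable_one_div_nat_pow.mpr one_lt_two).mul_left _
  refine ⟨⟨hG.1, fun n p q => ?_, fun l => (hsum l).tendsto_atTop_zero,
    fun n l Q hQ δ hδ => ?_, fun n l Q hQ => ?_⟩, hsum⟩ <;>
    obtain ⟨S, -, -, -, -, hJG, hS, hdecay, hunit⟩ := hG.2 n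
  · exact hJG.1 (p, q)
  · exact abs_integral_prod_pow_le hJG hS hdecay hunit hQ hδ
  · exact abs_integral_prod_sq_sub_one_le hJG hS hdecay hunit hQ

/-- An approximately uncorrelated Gaussian ensemble is an approximately uncorrelated
triangular scheme, with constants `C(ℓ) = #PP(ℓ)` and sequences `C_n^{(ℓ)} = #PP(2ℓ)/n²`,
which are summable over `n`. -/
theorem stmt3 {Ω : Type*} [MeasurableSpace Ω] (P : Measure Ω) [IsProbabilityMeasure P]
    (a : (n : ℕ) → Ω → Matrix (Fin n) (Fin n) ℝ) (hG : IsAUGaussian P a) :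
    IsApproxUncorr P a (fun l => (numPP l : ℝ)) (fun l n => (numPP (2 * l) : ℝ) / (n : ℝ) ^ 2) ∧
    ∀ l : ℕ, Summable fun n : ℕ => (numPP (2 * l) : ℝ) / (n : ℝ) ^ 2 :=
  stmt3_general P a hG
end

section
/- Let k,n∈ℕ and π∈Π(k) with π_i ≠ 0 for some odd i∈[k]. Let s ≥ 2 and let ℓ̲ = (ℓ_2,…,ℓ_s) ∈ {0,1,…,π_1+…+π_k}^{s−1} with ℓ̲ ≠ (0,…,0). Then #T_n^{(ℓ̲)}(π) ≤ k^k·n·b_n^{π_1+…+π_k−1} · ∏_{i∈{2,…,s}: ℓ_i=0} k^k·n·b_n^{π_1+…+π_k−1} · ∏_{i∈{2,…,s}: ℓ_i≥1} (2k)^k·k·(ks)^{ℓ_i}·b_n^{π_1+…+π_k−ℓ_i}. -/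
open Finset

/-- Cyclic successor in `Fin k`. -/
def cyc {k : ℕ} (j : Fin k) : Fin k := j + ⟨1 % k, Nat.mod_lt 1 j.pos⟩

/-- The endpoint set of the `j`-th edge of the tuple `t` (indices cyclic mod `k`). -/
def cedge {n k : ℕ} (t : Fin k → Fin n) (j : Fin k) : Finset (Fin n) := {t j, t (cyc j)}

/-- The multiplicity of the endpoint set `e` among the edges of `t`. -/
def edgeMult {n k : ℕ} (t : Fin k → Fin n) (e : Finset (Fin n)) : ℕ :=
  (Finset.univ.filter fun j => cedge t j = e).card

/-- `profileCount t l` is the number of distinct edge endpoint sets of multiplicity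
exactly `l` in `t`. -/
def profileCount {n k : ℕ} (t : Fin k → Fin n) (l : ℕ) : ℕ :=
  ((Finset.univ.image (cedge t)).filter fun e => edgeMult t e = l).card

/-- `π` is a possible profile of a `k`-tuple. -/
def IsProfile (k : ℕ) (π : ℕ → ℕ) : Prop :=
  ∃ (n : ℕ) (t : Fin k → Fin n), ∀ l : ℕ, π l = profileCount t l

/-- The tuple `t` is `b`-relevant. -/
def TupRel (n b : ℕ) {k : ℕ} (t : Fin k → Fin n) : Prop :=
  ∀ j : Fin k, BRelevant n b (t j) (t (cyc j))

/-- The set `𝒯_n(π)` of `b`-relevant `k`-tuples in `[n]^k` with profile `π`. -/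
def Tprof (n b k : ℕ) (π : ℕ → ℕ) : Set (Fin k → Fin n) :=
  {t | TupRel n b t ∧ ∀ l : ℕ, profileCount t l = π l}

/-- The set of distinct edge endpoint sets of `t`. -/
def edgeFinset {n k : ℕ} (t : Fin k → Fin n) : Finset (Finset (Fin n)) :=
  Finset.univ.image (cedge t)

/-- `𝒯_n^d(π)`: pairs of tuples in `𝒯_n(π)` with disjoint edge sets. -/
def TprofD (n b k : ℕ) (π : ℕ → ℕ) : Set ((Fin k → Fin n) × (Fin k → Fin n)) :=
  {st | st.1 ∈ Tprof n b k π ∧ st.2 ∈ Tprof n b k π ∧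
    edgeFinset st.1 ∩ edgeFinset st.2 = ∅}

/-- `𝒯_n^c(π)`: pairs of tuples in `𝒯_n(π)` sharing at least one edge. -/
def TprofC (n b k : ℕ) (π : ℕ → ℕ) : Set ((Fin k → Fin n) × (Fin k → Fin n)) :=
  {st | st.1 ∈ Tprof n b k π ∧ st.2 ∈ Tprof n b k π ∧
    edgeFinset st.1 ∩ edgeFinset st.2 ≠ ∅}

/-- `𝒯_n^{c,ℓ}(π)`: pairs of tuples in `𝒯_n(π)` sharing exactly `ℓ` edges. -/
def TprofCl (n b k : ℕ) (π : ℕ → ℕ) (l : ℕ) : Set ((Fin k → Fin n) × (Fin k → Fin n)) :=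
  {st | st.1 ∈ Tprof n b k π ∧ st.2 ∈ Tprof n b k π ∧
    (edgeFinset st.1 ∩ edgeFinset st.2).card = l}

/-- `𝒯_n^{(ℓ̲)}(π)`: `s`-tuples of tuples in `𝒯_n(π)` such that, for each `i ∈ {2,…,s}`,
the `i`-th tuple has exactly `L i` of its distinct edge endpoint sets in common with the
union of the edge endpoint sets of the previous tuples. -/
def TprofOv (n b k s : ℕ) (π : ℕ → ℕ) (L : Fin s → ℕ) : Set (Fin s → (Fin k → Fin n)) :=
  {T | (∀ i : Fin s, T i ∈ Tprof n b k π) ∧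
    ∀ i : Fin s, 0 < (i : ℕ) →
      (edgeFinset (T i) ∩
        (Finset.univ.filter fun j : Fin s => j < i).biUnion fun j => edgeFinset (T j)).card
        = L i}


/-!
The tuples are counted one at a time, given the earlier ones. A closed walk `t` is recovered
from its start, from the first time it visits the endpoint of each step, and from the steps that
discover a new vertex; since `t` is `b`-relevant, each of these changes the vertex by one of at
most `b` residues modulo `n`. An edge of odd multiplicity is not a bridge of the walk's graph, so
the walk has at most as many vertices as distinct edges, hence at most `N - 1` discovery steps,
which leaves at most `k ^ k * n * b ^ (N - 1)` walks. A walk sharing `ℓ ≥ 1` edges with the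
earlier ones is rotated to start on a shared edge (`k` choices); one bit per step marks the first
occurrences of shared edges (the bit of step `0` records the orientation of the starting edge
instead), each of these `ℓ` edges is one of at most `k * s` earlier edges, and the remaining
discovery steps traverse unshared edges, so there are at most `N - ℓ` of them.
-/

section Cyclic

variable {k : ℕ} [NeZero k]

theorem cyc_eq_add_one (j : Fin k) : cyc j = j + 1 := rfl

theorem val_cyc_of_lt {j : Fin k} (h : (j : ℕ) + 1 < k) : (cyc j : ℕ) = j + 1 := by
  rw [cyc_eq_add_one, Fin.val_add_one_of_lt' h]

theorem sum_comp_cyc {M : Type*} [AddCommMonoid M] (f : Fin k → M) :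
    ∑ j, f (cyc j) = ∑ j, f j :=
  Fintype.sum_equiv (Equiv.addRight 1) _ _ fun _ => rfl

theorem cyc_le_of_lt {i j : Fin k} (h : i < j) : cyc i ≤ j := by
  rw [Fin.le_def, val_cyc_of_lt (by omega)]
  exact h

theorem cyc_induction {P : Fin k → Prop} (zero : P 0)
    (succ : ∀ j : Fin k, (j : ℕ) + 1 < k → P j → P (cyc j)) (j : Fin k) : P j := by
  obtain ⟨k, rfl⟩ := Nat.exists_eq_succ_of_ne_zero (NeZero.ne k)
  induction j using Fin.induction with
  | zero => exact zero
  | succ i hi => simpa [cyc_eq_add_one] using succ i.castSucc (by simp) hi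

end Cyclic

section Pairs

variable {α : Type*} [DecidableEq α]

theorem eq_of_pair_eq_pair_left {a c c' : α} (h : ({a, c} : Finset α) = {a, c'}) : c = c' := by
  have hc : c ∈ ({a, c'} : Finset α) := h ▸ by simp
  have hc' : c' ∈ ({a, c} : Finset α) := h.symm ▸ by simp
  simp only [mem_insert, mem_singleton] at hc hc'
  grind

theorem pair_eq_pair_iff {a c a' c' : α} :
    ({a, c} : Finset α) = {a', c'} ↔ (a = a' ∧ c = c') ∨ (a = c' ∧ c = a') := by
  constructor
  · intro h
    have ha : a ∈ ({a', c'} : Finset α) := h ▸ by simp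
    simp only [mem_insert, mem_singleton] at ha
    rcases ha with rfl | rfl
    · exact .inl ⟨rfl, eq_of_pair_eq_pair_left h⟩
    · exact .inr ⟨rfl, eq_of_pair_eq_pair_left (h.trans (pair_comm _ _))⟩
  · rintro (⟨rfl, rfl⟩ | ⟨rfl, rfl⟩)
    · rfl
    · exact pair_comm _ _

theorem eq_of_pair_eq_pair_of_le_iff {β : Type*} [LinearOrder β] {a c a' c' : β}
    (h : ({a, c} : Finset β) = {a', c'}) (hle : a ≤ c ↔ a' ≤ c') : a = a' := by
  rcases pair_eq_pair_iff.mp h with ⟨rfl, -⟩ | ⟨rfl, rfl⟩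
  · rfl
  · by_cases hac : a ≤ c
    · exact le_antisymm hac (hle.mp hac)
    · exact absurd (hle.mpr (le_of_not_ge hac)) hac

end Pairs

section PairGraph

variable {α : Type*} [DecidableEq α]

abbrev pairGraph (F : Finset (Finset α)) : SimpleGraph α :=
  SimpleGraph.fromRel fun x y => ({x, y} : Finset α) ∈ F

theorem pairGraph_reachable_of_mem {F : Finset (Finset α)} {x y : α}
    (h : ({x, y} : Finset α) ∈ F) : (pairGraph F).Reachable x y := by
  by_cases hxy : x = y
  · exact hxy ▸ .rfl
  · exact SimpleGraph.Adj.reachable (by simp [hxy, h])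

theorem exists_mem_dist_lt_of_reachable {F : Finset (Finset α)} {a v : α}
    (hr : (pairGraph F).Reachable a v) (hne : a ≠ v) :
    ∃ u, ({u, v} : Finset α) ∈ F ∧ (pairGraph F).dist a u < (pairGraph F).dist a v := by
  obtain ⟨p, hp⟩ := hr.exists_walk_length_eq_dist
  have hnil : ¬ p.Nil := fun h => hne h.eq
  refine ⟨p.penultimate, ?_, ?_⟩
  · have hadj := p.adj_penultimate hnil
    simp only [SimpleGraph.fromRel_adj] at hadj
    exact hadj.2.elim id fun h => by rwa [pair_comm]
  · have := SimpleGraph.dist_le p.dropLast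
    have := p.length_dropLast_add_one hnil
    omega

/-- Sending each vertex to the edge towards a neighbour closer to `a` is injective. -/
theorem card_erase_le_card_of_reachable (F : Finset (Finset α)) (a : α) (S : Finset α)
    (hS : ∀ v ∈ S, (pairGraph F).Reachable a v) : #(S.erase a) ≤ #F := by
  have hparent : ∀ v ∈ S.erase a, ∃ u, ({u, v} : Finset α) ∈ F ∧
      (pairGraph F).dist a u < (pairGraph F).dist a v := fun v hv =>
    exists_mem_dist_lt_of_reachable (hS v (mem_of_mem_erase hv)) (ne_of_mem_erase hv).symm
  choose! p hpF hpd using hparent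
  refine card_le_card_of_injOn (fun v => ({p v, v} : Finset α)) hpF ?_
  intro v hv w hw hvw
  rcases pair_eq_pair_iff.mp hvw with ⟨-, h⟩ | ⟨h₁, h₂⟩
  · exact h
  · have hv' := hpd v hv
    have hw' := hpd w hw
    rw [h₁] at hv'
    rw [← h₂] at hw'
    exact absurd (hv'.trans hw') (lt_irrefl _)

end PairGraph

section Discovery

variable {n k : ℕ}

def arrivalIdx (t : Fin k → Fin n) (j : Fin k) : Fin k :=
  (univ.filter fun i => t i = t (cyc j)).min' ⟨cyc j, by simp⟩

def discoveries (t : Fin k → Fin n) : Finset (Fin k) :=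
  univ.filter fun j => j < arrivalIdx t j

def firstOccs (t : Fin k → Fin n) : Finset (Fin k) :=
  univ.filter fun j => ∀ i < j, cedge t i ≠ cedge t j

variable {t u : Fin k → Fin n}

theorem apply_arrivalIdx (t : Fin k → Fin n) (j : Fin k) : t (arrivalIdx t j) = t (cyc j) := by
  have := min'_mem (univ.filter fun i => t i = t (cyc j)) ⟨cyc j, by simp⟩
  exact (mem_filter.mp this).2

theorem arrivalIdx_le {i j : Fin k} (h : t i = t (cyc j)) : arrivalIdx t j ≤ i :=
  min'_le _ _ (by simp [h])

theorem apply_cyc_ne_of_mem_discoveries {i j : Fin k} (hj : j ∈ discoveries t) (hi : i ≤ j) :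
    t i ≠ t (cyc j) := fun h =>
  (arrivalIdx_le h).not_gt (lt_of_le_of_lt hi (mem_filter.mp hj).2)

theorem eq_of_arrivalIdx_eq [NeZero k] (h0 : t 0 = u 0) (harr : arrivalIdx t = arrivalIdx u)
    (hdisc : ∀ j ∈ discoveries t, t j = u j → t (cyc j) = u (cyc j)) : t = u := by
  suffices key : ∀ j, ∀ i ≤ j, t i = u i from funext fun j => key j j le_rfl
  refine cyc_induction (fun i hi => by rwa [nonpos_iff_eq_zero.mp hi]) fun j hj ih i hi => ?_
  have hval : (cyc j : ℕ) = j + 1 := val_cyc_of_lt hj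
  rcases Nat.lt_or_ge (j : ℕ) i with hji | hij
  · obtain rfl : i = cyc j := Fin.ext (by rw [Fin.le_def] at hi; omega)
    by_cases hd : j ∈ discoveries t
    · exact hdisc j hd (ih j le_rfl)
    · have hle : arrivalIdx t j ≤ j := by simpa [discoveries] using hd
      rw [← apply_arrivalIdx t, ih _ hle, harr, apply_arrivalIdx u]
  · exact ih i hij

theorem discoveries_eq_of_arrivalIdx_eq (h : arrivalIdx t = arrivalIdx u) :
    discoveries t = discoveries u := by
  simp only [discoveries, h]

theorem card_discoveries_le [NeZero k] (t : Fin k → Fin n) :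
    #(discoveries t) ≤ #((univ.image t).erase (t 0)) := by
  refine card_le_card_of_injOn (fun j => t (cyc j)) (fun j hj => ?_) ?_
  · exact mem_erase.mpr ⟨(apply_cyc_ne_of_mem_discoveries hj (Fin.zero_le _)).symm,
      mem_image_of_mem _ (mem_univ _)⟩
  · intro i hi j hj hij
    rcases lt_trichotomy i j with h | h | h
    · exact absurd hij (apply_cyc_ne_of_mem_discoveries hj (cyc_le_of_lt h))
    · exact h
    · exact absurd hij.symm (apply_cyc_ne_of_mem_discoveries hi (cyc_le_of_lt h))

theorem discoveries_subset_firstOccs [NeZero k] (t : Fin k → Fin n) :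
    discoveries t ⊆ firstOccs t := by
  intro j hj
  refine mem_filter.mpr ⟨mem_univ _, fun i hi he => ?_⟩
  have hmem : t (cyc j) ∈ cedge t i := he ▸ by simp [cedge]
  simp only [cedge, mem_insert, mem_singleton] at hmem
  rcases hmem with h | h
  · exact apply_cyc_ne_of_mem_discoveries hj hi.le h.symm
  · exact apply_cyc_ne_of_mem_discoveries hj (cyc_le_of_lt hi) h.symm

theorem cedge_injOn_firstOccs (t : Fin k → Fin n) : Set.InjOn (cedge t) (firstOccs t) := by
  intro i hi j hj hij
  simp only [coe_filter, mem_univ, true_and, Set.mem_ofPred_eq, firstOccs] at hi hj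
  rcases lt_trichotomy i j with h | h | h
  · exact absurd hij (hj i h)
  · exact h
  · exact absurd hij.symm (hi j h)

theorem image_cedge_firstOccs (t : Fin k → Fin n) :
    (firstOccs t).image (cedge t) = edgeFinset t := by
  refine (image_subset_image (subset_univ _)).antisymm fun e he => ?_
  obtain ⟨j, -, rfl⟩ := mem_image.mp he
  have hne : (univ.filter fun i => cedge t i = cedge t j).Nonempty := ⟨j, by simp⟩
  obtain ⟨hmin, hmin'⟩ := mem_filter.mp (min'_mem _ hne)
  refine mem_image.mpr ⟨_, mem_filter.mpr ⟨mem_univ _, fun i hi he => ?_⟩, hmin'⟩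
  exact hi.not_ge (min'_le _ _ (by simp [he, hmin']))

end Discovery

section VertexBound

variable {n k : ℕ} [NeZero k] {t : Fin k → Fin n}

theorem pairGraph_reachable_of_forall {F : Finset (Finset (Fin n))}
    (h : ∀ j, (pairGraph F).Reachable (t j) (t (cyc j))) (v : Fin n) (hv : v ∈ univ.image t) :
    (pairGraph F).Reachable (t 0) v := by
  obtain ⟨j, -, rfl⟩ := mem_image.mp hv
  exact cyc_induction (P := fun j => (pairGraph F).Reachable (t 0) (t j)) .rfl
    (fun j _ ih => ih.trans (h j)) j

/-- Without its edge `j₀`, if `t (cyc j₀)` is unreachable from `t j₀`, that edge is the only one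
leaving the component of `t j₀`, and a closed walk leaves and re-enters it equally often. -/
theorem even_edgeMult_of_not_reachable {j₀ : Fin k}
    (h : ¬ (pairGraph ((edgeFinset t).erase (cedge t j₀))).Reachable (t j₀) (t (cyc j₀))) :
    Even (edgeMult t (cedge t j₀)) := by
  set G := pairGraph ((edgeFinset t).erase (cedge t j₀))
  let φ : Fin n → ZMod 2 := fun v => if G.Reachable (t j₀) v then 1 else 0
  have hterm : ∀ j, φ (t (cyc j)) - φ (t j) = if cedge t j = cedge t j₀ then 1 else 0 := by
    intro j
    split_ifs with hj
    · have hφa : φ (t j₀) = 1 := if_pos .rfl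
      have hφc : φ (t (cyc j₀)) = 0 := if_neg h
      rcases pair_eq_pair_iff.mp hj with ⟨h₁, h₂⟩ | ⟨h₁, h₂⟩
      · rw [h₁, h₂, hφa, hφc]; decide
      · rw [h₁, h₂, hφa, hφc]; decide
    · have hr : G.Reachable (t j) (t (cyc j)) :=
        pairGraph_reachable_of_mem (mem_erase.mpr ⟨hj, mem_image_of_mem _ (mem_univ j)⟩)
      have : G.Reachable (t j₀) (t j) ↔ G.Reachable (t j₀) (t (cyc j)) :=
        ⟨fun h' => h'.trans hr, fun h' => h'.trans hr.symm⟩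
      simp only [φ, this, sub_self]
  have hsum : ((edgeMult t (cedge t j₀) : ℕ) : ZMod 2) = 0 := by
    rw [edgeMult, ← sum_boole, ← sum_congr rfl fun j _ => hterm j, sum_sub_distrib,
      sum_comp_cyc (fun j => φ (t j)), sub_self]
  exact ZMod.natCast_eq_zero_iff_even.mp hsum

/-- An edge of odd multiplicity is not a bridge, so the walk's graph stays connected after
deleting it and therefore has at least as many edges as vertices. -/
theorem card_image_le_card_edgeFinset {e : Finset (Fin n)} (he : e ∈ edgeFinset t)
    (hodd : Odd (edgeMult t e)) : #(univ.image t) ≤ #(edgeFinset t) := by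
  obtain ⟨j₀, -, rfl⟩ := mem_image.mp he
  set G := pairGraph ((edgeFinset t).erase (cedge t j₀))
  have hcut : G.Reachable (t j₀) (t (cyc j₀)) := by
    by_contra hnot
    exact Nat.not_even_iff_odd.mpr hodd (even_edgeMult_of_not_reachable hnot)
  have hstep : ∀ j, G.Reachable (t j) (t (cyc j)) := by
    intro j
    by_cases hj : cedge t j = cedge t j₀
    · rcases pair_eq_pair_iff.mp hj with ⟨h₁, h₂⟩ | ⟨h₁, h₂⟩
      · rw [h₁, h₂]; exact hcut
      · rw [h₁, h₂]; exact hcut.symm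
    · exact pairGraph_reachable_of_mem (mem_erase.mpr ⟨hj, mem_image_of_mem _ (mem_univ j)⟩)
  have hcard := card_erase_le_card_of_reachable _ _ _ (pairGraph_reachable_of_forall hstep)
  rw [card_erase_of_mem (mem_image_of_mem _ (mem_univ 0)), card_erase_of_mem he] at hcard
  have : 0 < #(edgeFinset t) := card_pos.mpr ⟨_, he⟩
  omega

theorem card_discoveries_lt {e : Finset (Fin n)} (he : e ∈ edgeFinset t)
    (hodd : Odd (edgeMult t e)) : #(discoveries t) < #(edgeFinset t) := by
  have h₁ := card_discoveries_le t
  have h₂ := card_image_le_card_edgeFinset he hodd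
  rw [card_erase_of_mem (mem_image_of_mem _ (mem_univ 0))] at h₁
  have : 0 < #(univ.image t) := card_pos.mpr ⟨t 0, mem_image_of_mem _ (mem_univ 0)⟩
  omega

end VertexBound

section Bandwidth

variable {n k b : ℕ}

/-- Every step of a `b`-relevant tuple changes the vertex by one of these `b` residues; the
window is chosen so that this also holds for `b = n`, where `(b - 1) / 2` would miss `n / 2`. -/
noncomputable def diffSet (n b : ℕ) : Finset (ZMod n) :=
  (Ico (-((b : ℤ) / 2)) (b - (b : ℤ) / 2)).image (Int.cast : ℤ → ZMod n)

theorem card_diffSet_le : #(diffSet n b) ≤ b :=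
  card_image_le.trans (by rw [Int.card_Ico]; omega)

def stepDiff (t : Fin k → Fin n) (j : Fin k) : ZMod n :=
  ((t (cyc j) : ℕ) : ZMod n) - ((t j : ℕ) : ZMod n)

theorem stepDiff_mem_diffSet (hb : IsBandwidth n b) {t : Fin k → Fin n} (ht : TupRel n b t)
    (j : Fin k) : stepDiff t j ∈ diffSet n b := by
  set w : ℤ := ((t (cyc j) : ℕ) : ℤ) - ((t j : ℕ) : ℤ)
  have hw : stepDiff t j = (w : ZMod n) := by push_cast [stepDiff, w]; ring
  have hlt₁ := (t j).isLt
  have hlt₂ := (t (cyc j)).isLt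
  obtain ⟨w', hw'I, hw'⟩ :
      ∃ w' ∈ Ico (-((b : ℤ) / 2)) (b - (b : ℤ) / 2), (w' : ZMod n) = w := by
    have : (-((b : ℤ) / 2) ≤ w - n ∧ w - n < b - b / 2) ∨
        (-((b : ℤ) / 2) ≤ w ∧ w < b - b / 2) ∨
        (-((b : ℤ) / 2) ≤ w + n ∧ w + n < b - b / 2) := by
      rcases hb with hbn | ⟨-, hbn, m, hm⟩ <;> rcases ht j with h | h | h <;> omega
    rcases this with h | h | h
    · exact ⟨w - n, mem_Ico.mpr h, by simp⟩
    · exact ⟨w, mem_Ico.mpr h, rfl⟩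
    · exact ⟨w + n, mem_Ico.mpr h, by simp⟩
  exact mem_image.mpr ⟨w', hw'I, hw'.trans hw.symm⟩

theorem eq_of_stepDiff_eq {t u : Fin k → Fin n} {j : Fin k} (hd : stepDiff t j = stepDiff u j)
    (h : t j = u j) : t (cyc j) = u (cyc j) := by
  rw [stepDiff, stepDiff, h, sub_left_inj, ZMod.natCast_eq_natCast_iff',
    Nat.mod_eq_of_lt (t (cyc j)).isLt, Nat.mod_eq_of_lt (u (cyc j)).isLt] at hd
  exact Fin.ext hd

end Bandwidth

section Rotation

variable {n k b : ℕ} [NeZero k]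

def rot (r : Fin k) (t : Fin k → Fin n) : Fin k → Fin n := fun j => t (j + r)

theorem rot_neg_rot (r : Fin k) (t : Fin k → Fin n) : rot (-r) (rot r t) = t := by
  funext j
  simp [rot]

theorem cedge_rot (r : Fin k) (t : Fin k → Fin n) (j : Fin k) :
    cedge (rot r t) j = cedge t (j + r) := by
  simp only [cedge, rot, cyc_eq_add_one, add_right_comm]

theorem edgeFinset_rot (r : Fin k) (t : Fin k → Fin n) :
    edgeFinset (rot r t) = edgeFinset t := by
  have : cedge (rot r t) = cedge t ∘ Equiv.addRight r := funext (cedge_rot r t)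
  rw [edgeFinset, this, image_comp, image_univ_equiv, edgeFinset]

theorem TupRel.rot {t : Fin k → Fin n} (ht : TupRel n b t) (r : Fin k) :
    TupRel n b (rot r t) := by
  intro j
  simpa only [_root_.rot, cyc_eq_add_one, add_right_comm] using ht (j + r)

end Rotation

section SharedEdges

variable {n k : ℕ}

def firstOccsIn (U : Finset (Finset (Fin n))) (t : Fin k → Fin n) : Finset (Fin k) :=
  (firstOccs t).filter fun j => cedge t j ∈ U

theorem card_firstOccsIn (U : Finset (Finset (Fin n))) (t : Fin k → Fin n) :
    #(firstOccsIn U t) = #(edgeFinset t ∩ U) := by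
  rw [firstOccsIn,
    ← card_image_of_injOn ((cedge_injOn_firstOccs t).mono (filter_subset _ _)),
    ← filter_image (p := (· ∈ U)), image_cedge_firstOccs, filter_mem_eq_inter]

theorem card_discoveries_sdiff_le [NeZero k] (U : Finset (Finset (Fin n)))
    (t : Fin k → Fin n) :
    #(discoveries t \ firstOccsIn U t) ≤ #(edgeFinset t \ U) := by
  have hsub : discoveries t \ firstOccsIn U t ⊆ firstOccs t :=
    sdiff_subset.trans (discoveries_subset_firstOccs t)
  refine card_le_card_of_injOn (cedge t) (fun j hj => ?_) ((cedge_injOn_firstOccs t).mono hsub)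
  have hj' := mem_sdiff.mp hj
  refine mem_sdiff.mpr ⟨mem_image_of_mem _ (mem_univ j), fun hU => hj'.2 ?_⟩
  exact mem_filter.mpr ⟨hsub hj, hU⟩

variable [NeZero k]

/-- A walk starting on an edge of `U` has `0` among its first occurrences of edges of `U`, so
bit `0` is free to record the orientation of that starting edge. -/
def shareBits (U : Finset (Finset (Fin n))) (t : Fin k → Fin n) (j : Fin k) : Bool :=
  if j = 0 then decide (t 0 ≤ t (cyc 0)) else decide (j ∈ firstOccsIn U t)

theorem zero_mem_firstOccsIn {U : Finset (Finset (Fin n))} {t : Fin k → Fin n}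
    (h : cedge t 0 ∈ U) : 0 ∈ firstOccsIn U t := by
  simp [firstOccsIn, firstOccs, h]

theorem firstOccsIn_eq_of_shareBits_eq {U : Finset (Finset (Fin n))} {t u : Fin k → Fin n}
    (ht : cedge t 0 ∈ U) (hu : cedge u 0 ∈ U) (h : shareBits U t = shareBits U u) :
    firstOccsIn U t = firstOccsIn U u := by
  ext j
  by_cases hj : j = 0
  · subst hj
    exact iff_of_true (zero_mem_firstOccsIn ht) (zero_mem_firstOccsIn hu)
  · simpa [shareBits, hj] using congrFun h j

end SharedEdges

theorem card_le_mul_card_of_fiber {α β : Type*} [DecidableEq β] [Fintype β] (S : Finset α)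
    (f : α → β) (m : ℕ) (h : ∀ t₀ ∈ S, #{t ∈ S | f t = f t₀} ≤ m) :
    #S ≤ m * Fintype.card β := by
  refine (card_le_mul_card_image (f := f) S m fun y hy => ?_).trans
    (Nat.mul_le_mul_left _ (card_le_univ _))
  obtain ⟨t₀, ht₀, rfl⟩ := mem_image.mp hy
  exact h t₀ ht₀

theorem IsBandwidth.one_le {n b : ℕ} (hb : IsBandwidth n b) (hn : 0 < n) : 1 ≤ b := by
  rcases hb with rfl | ⟨h, -⟩ <;> omega

section WalkCount

variable {n k b : ℕ} [NeZero k]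

theorem eq_of_shareBits_eq {U : Finset (Finset (Fin n))} {t u : Fin k → Fin n}
    (ht : cedge t 0 ∈ U) (harr : arrivalIdx t = arrivalIdx u)
    (hbits : shareBits U t = shareBits U u)
    (hedge : ∀ j ∈ firstOccsIn U t, cedge t j = cedge u j)
    (hdiff : ∀ j ∈ discoveries t \ firstOccsIn U t, stepDiff t j = stepDiff u j) : t = u := by
  have h0 : t 0 = u 0 := by
    refine eq_of_pair_eq_pair_of_le_iff (hedge 0 (zero_mem_firstOccsIn ht)) ?_
    simpa [shareBits] using congrFun hbits 0
  refine eq_of_arrivalIdx_eq h0 harr fun j hj htu => ?_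
  by_cases hS : j ∈ firstOccsIn U t
  · have := hedge j hS
    rw [cedge, cedge, htu] at this
    exact eq_of_pair_eq_pair_left this
  · exact eq_of_stepDiff_eq (hdiff j (mem_sdiff.mpr ⟨hj, hS⟩)) htu

theorem card_le_of_start_arrivalIdx_eq (hb : IsBandwidth n b) {t₀ : Fin k → Fin n}
    {A : Finset (Fin k → Fin n)}
    (hA : ∀ t ∈ A, TupRel n b t ∧ t 0 = t₀ 0 ∧ arrivalIdx t = arrivalIdx t₀) :
    #A ≤ b ^ #(discoveries t₀) := by
  calc _ ≤ #(Fintype.piFinset fun _ : discoveries t₀ => diffSet n b) := by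
        refine card_le_card_of_injOn (fun t (j : discoveries t₀) => stepDiff t j)
          (fun t ht => ?_) fun t ht u hu htu => ?_
        · simpa using fun j _ => stepDiff_mem_diffSet hb (hA t ht).1 j
        · obtain ⟨-, ht0, htarr⟩ := hA t ht
          obtain ⟨-, hu0, huarr⟩ := hA u hu
          refine eq_of_arrivalIdx_eq (ht0.trans hu0.symm) (htarr.trans huarr.symm)
            fun j hj hju => eq_of_stepDiff_eq ?_ hju
          rw [discoveries_eq_of_arrivalIdx_eq htarr] at hj
          exact congrFun htu ⟨j, hj⟩
    _ = #(diffSet n b) ^ #(discoveries t₀) := by simp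
    _ ≤ b ^ #(discoveries t₀) := Nat.pow_le_pow_left card_diffSet_le _

theorem card_le_of_arrivalIdx_shareBits_eq (hb : IsBandwidth n b)
    {U : Finset (Finset (Fin n))} {t₀ : Fin k → Fin n} (h0 : cedge t₀ 0 ∈ U)
    {A : Finset (Fin k → Fin n)}
    (hA : ∀ t ∈ A, TupRel n b t ∧ cedge t 0 ∈ U ∧ arrivalIdx t = arrivalIdx t₀ ∧
      shareBits U t = shareBits U t₀) :
    #A ≤ b ^ #(discoveries t₀ \ firstOccsIn U t₀) * #U ^ #(firstOccsIn U t₀) := by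
  set S := firstOccsIn U t₀
  set J := discoveries t₀ \ S
  have hS : ∀ t ∈ A, firstOccsIn U t = S := fun t ht =>
    firstOccsIn_eq_of_shareBits_eq (hA t ht).2.1 h0 (hA t ht).2.2.2
  calc _ ≤ #((Fintype.piFinset fun _ : J => diffSet n b) ×ˢ
          Fintype.piFinset fun _ : S => U) := by
        refine card_le_card_of_injOn
          (fun t => (fun j : J => stepDiff t j, fun j : S => cedge t j))
          (fun t ht => ?_) fun t ht u hu htu => ?_
        · simp only [mem_coe, mem_product, Fintype.mem_piFinset]
          refine ⟨fun j => stepDiff_mem_diffSet hb (hA t ht).1 j, fun j => ?_⟩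
          have hj : (j : Fin k) ∈ firstOccsIn U t := by rw [hS t ht]; exact j.2
          exact (mem_filter.mp hj).2
        · obtain ⟨-, ht0, htarr, htbits⟩ := hA t ht
          obtain ⟨-, -, huarr, hubits⟩ := hA u hu
          simp only [Prod.ext_iff] at htu
          refine eq_of_shareBits_eq ht0 (htarr.trans huarr.symm) (htbits.trans hubits.symm)
            (fun j hj => ?_) fun j hj => ?_
          · rw [hS t ht] at hj
            exact congrFun htu.2 ⟨j, hj⟩
          · rw [discoveries_eq_of_arrivalIdx_eq htarr, hS t ht] at hj
            exact congrFun htu.1 ⟨j, hj⟩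
    _ = #(diffSet n b) ^ #J * #U ^ #S := by simp
    _ ≤ b ^ #J * #U ^ #S := Nat.mul_le_mul_right _ (Nat.pow_le_pow_left card_diffSet_le _)

open scoped Classical in
theorem card_walks_with_odd_edge_le (hb : IsBandwidth n b) (N : ℕ) :
    #{t : Fin k → Fin n | TupRel n b t ∧ #(edgeFinset t) = N ∧
      ∃ e ∈ edgeFinset t, Odd (edgeMult t e)} ≤ k ^ k * n * b ^ (N - 1) := by
  refine (card_le_mul_card_of_fiber _ (fun t => (t 0, arrivalIdx t)) (b ^ (N - 1))
    fun t₀ ht₀ => ?_).trans_eq (by simp [mul_comm])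
  obtain ⟨-, hN, e, he, hodd⟩ := (mem_filter.mp ht₀).2
  refine (card_le_of_start_arrivalIdx_eq hb (t₀ := t₀) fun t ht => ?_).trans
    (Nat.pow_le_pow_right (hb.one_le (t₀ 0).pos) ?_)
  · simp only [mem_filter, mem_univ, true_and, Prod.ext_iff] at ht
    exact ⟨ht.1.1, ht.2⟩
  · have := card_discoveries_lt he hodd
    omega

open scoped Classical in
theorem card_anchored_walks_le (hb : IsBandwidth n b) (U : Finset (Finset (Fin n))) (N ℓ : ℕ) :
    #{t : Fin k → Fin n | TupRel n b t ∧ #(edgeFinset t) = N ∧ cedge t 0 ∈ U ∧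
      #(edgeFinset t ∩ U) = ℓ} ≤ (2 * k) ^ k * #U ^ ℓ * b ^ (N - ℓ) := by
  refine (card_le_mul_card_of_fiber _ (fun t => (arrivalIdx t, shareBits U t))
    (b ^ (N - ℓ) * #U ^ ℓ) fun t₀ ht₀ => ?_).trans_eq (by simp [mul_pow]; ring)
  obtain ⟨-, hN, h0, hℓ⟩ := (mem_filter.mp ht₀).2
  refine (card_le_of_arrivalIdx_shareBits_eq hb h0 fun t ht => ?_).trans ?_
  · simp only [mem_filter, mem_univ, true_and, Prod.ext_iff] at ht
    exact ⟨ht.1.1, ht.1.2.2.1, ht.2⟩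
  · have hJ := card_discoveries_sdiff_le U t₀
    rw [card_sdiff (t := edgeFinset t₀), inter_comm, hN, hℓ] at hJ
    rw [card_firstOccsIn, hℓ]
    exact Nat.mul_le_mul_right _ (Nat.pow_le_pow_right (hb.one_le (t₀ 0).pos) hJ)

open scoped Classical in
theorem card_sharing_walks_le (hb : IsBandwidth n b) (U : Finset (Finset (Fin n))) {N ℓ : ℕ}
    (hℓ : 1 ≤ ℓ) :
    #{t : Fin k → Fin n | TupRel n b t ∧ #(edgeFinset t) = N ∧
      #(edgeFinset t ∩ U) = ℓ} ≤
      k * ((2 * k) ^ k * #U ^ ℓ * b ^ (N - ℓ)) := by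
  set A : Finset (Fin k → Fin n) :=
    {t | TupRel n b t ∧ #(edgeFinset t) = N ∧ cedge t 0 ∈ U ∧ #(edgeFinset t ∩ U) = ℓ}
  calc _ ≤ #(univ.biUnion fun r : Fin k => A.image (rot (-r))) := by
        refine card_le_card fun t ht => ?_
        obtain ⟨hrel, hN, hℓt⟩ := (mem_filter.mp ht).2
        obtain ⟨e, he⟩ := card_pos.mp (hℓt ▸ hℓ : 0 < #(edgeFinset t ∩ U))
        obtain ⟨heE, heU⟩ := mem_inter.mp he
        obtain ⟨r, -, rfl⟩ := mem_image.mp heE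
        refine mem_biUnion.mpr ⟨r, mem_univ _, mem_image.mpr ⟨rot r t, ?_, rot_neg_rot r t⟩⟩
        simp only [A, mem_filter, mem_univ, true_and, edgeFinset_rot, cedge_rot, zero_add]
        exact ⟨hrel.rot r, hN, heU, hℓt⟩
    _ ≤ ∑ r : Fin k, #(A.image (rot (-r))) := card_biUnion_le
    _ ≤ ∑ _r : Fin k, #A := sum_le_sum fun _ _ => card_image_le
    _ = k * #A := by simp
    _ ≤ _ := Nat.mul_le_mul_left _ (card_anchored_walks_le hb U N ℓ)

end WalkCount

theorem card_le_prod_of_card_extensions_le {X : Type*} [DecidableEq X] :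
    ∀ {s : ℕ} (A : Finset (Fin s → X)) (c : Fin s → ℕ),
      (∀ i, ∀ T ∈ A,
        #((A.filter fun T' => ∀ j < i, T' j = T j).image fun T' => T' i) ≤ c i) →
      #A ≤ ∏ i, c i
  | 0, A, c, _ => by simpa using card_le_one.mpr fun a _ b _ => Subsingleton.elim a b
  | s + 1, A, c, hA => by
    rw [Fin.prod_univ_castSucc]
    have hinit : #(A.image Fin.init) ≤ ∏ i : Fin s, c i.castSucc := by
      refine card_le_prod_of_card_extensions_le _ _ fun i P hP => ?_
      obtain ⟨T, hT, rfl⟩ := mem_image.mp hP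
      refine (card_le_card fun x hx => ?_).trans (hA i.castSucc T hT)
      obtain ⟨P', hP', rfl⟩ := mem_image.mp hx
      obtain ⟨hP'A, hP'T⟩ := mem_filter.mp hP'
      obtain ⟨T', hT', rfl⟩ := mem_image.mp hP'A
      refine mem_image.mpr ⟨T', mem_filter.mpr ⟨hT', fun j hj => ?_⟩, rfl⟩
      obtain ⟨j, rfl⟩ :=
        Fin.exists_castSucc_eq.mpr (ne_of_lt (hj.trans (Fin.castSucc_lt_last i)))
      exact hP'T j (Fin.castSucc_lt_castSucc_iff.mp hj)
    refine (card_le_mul_card_image A _ fun P hP => ?_).trans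
      (Nat.mul_le_mul_left _ hinit) |>.trans_eq (mul_comm _ _)
    obtain ⟨T, hT, rfl⟩ := mem_image.mp hP
    refine le_trans ?_ (hA (Fin.last s) T hT)
    rw [← card_image_of_injOn (f := fun T' => T' (Fin.last s))]
    · refine card_le_card (image_subset_image fun T' hT' => ?_)
      obtain ⟨hT'A, hT'T⟩ := mem_filter.mp hT'
      refine mem_filter.mpr ⟨hT'A, fun j hj => ?_⟩
      obtain ⟨j, rfl⟩ := Fin.exists_castSucc_eq.mpr (ne_of_lt hj)
      exact congrFun hT'T j
    · intro T₁ h₁ T₂ h₂ h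
      rw [← Fin.snoc_init_self T₁, ← Fin.snoc_init_self T₂, (mem_filter.mp h₁).2,
        (mem_filter.mp h₂).2]
      exact congrArg _ h

section Profile

variable {n b k : ℕ} {π : ℕ → ℕ}

theorem card_edgeFinset_of_mem_tprof {t : Fin k → Fin n} (ht : t ∈ Tprof n b k π) :
    #(edgeFinset t) = ∑ m ∈ Icc 1 k, π m := by
  have hmaps : ∀ e ∈ edgeFinset t, edgeMult t e ∈ Icc 1 k := by
    intro e he
    obtain ⟨j, -, rfl⟩ := mem_image.mp he
    exact mem_Icc.mpr
      ⟨card_pos.mpr ⟨j, by simp⟩, (card_filter_le _ _).trans (card_fin k).le⟩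
  rw [card_eq_sum_card_fiberwise hmaps]
  exact sum_congr rfl fun m _ => ht.2 m

theorem exists_odd_edgeMult_of_mem_tprof {t : Fin k → Fin n} (ht : t ∈ Tprof n b k π)
    (hodd : ∃ i : ℕ, Odd i ∧ i ≤ k ∧ π i ≠ 0) :
    ∃ e ∈ edgeFinset t, Odd (edgeMult t e) := by
  obtain ⟨i, hi, -, hπi⟩ := hodd
  obtain ⟨e, he⟩ := card_pos.mp (Nat.pos_of_ne_zero ((ht.2 i).trans_ne hπi))
  exact ⟨e, (mem_filter.mp he).1, (mem_filter.mp he).2 ▸ hi⟩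

open scoped Classical in
theorem card_tprof_le [NeZero k] (hb : IsBandwidth n b)
    (hodd : ∃ i : ℕ, Odd i ∧ i ≤ k ∧ π i ≠ 0) :
    #{t : Fin k → Fin n | t ∈ Tprof n b k π} ≤
      k ^ k * n * b ^ ((∑ m ∈ Icc 1 k, π m) - 1) := by
  refine (card_le_card fun t ht => ?_).trans (card_walks_with_odd_edge_le hb _)
  simp only [mem_filter, mem_univ, true_and] at ht ⊢
  exact ⟨ht.1, card_edgeFinset_of_mem_tprof ht, exists_odd_edgeMult_of_mem_tprof ht hodd⟩

open scoped Classical in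
theorem card_tprof_sharing_le [NeZero k] (hb : IsBandwidth n b) (U : Finset (Finset (Fin n)))
    {ℓ : ℕ} (hℓ : 1 ≤ ℓ) :
    #{t : Fin k → Fin n | t ∈ Tprof n b k π ∧ #(edgeFinset t ∩ U) = ℓ} ≤
      (2 * k) ^ k * k * #U ^ ℓ * b ^ ((∑ m ∈ Icc 1 k, π m) - ℓ) := by
  refine (card_le_card fun t ht => ?_).trans
    ((card_sharing_walks_le hb U hℓ).trans_eq (by ring))
  simp only [mem_filter, mem_univ, true_and] at ht ⊢
  exact ⟨ht.1.1, card_edgeFinset_of_mem_tprof ht.1, ht.2⟩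

end Profile

section Overlap

variable {n k s : ℕ}

def priorEdges (T : Fin s → Fin k → Fin n) (i : Fin s) : Finset (Finset (Fin n)) :=
  (univ.filter fun j : Fin s => j < i).biUnion fun j => edgeFinset (T j)

theorem card_priorEdges_le (T : Fin s → Fin k → Fin n) (i : Fin s) :
    #(priorEdges T i) ≤ k * s := by
  calc _ ≤ ∑ j ∈ univ.filter fun j : Fin s => j < i, #(edgeFinset (T j)) := card_biUnion_le
    _ ≤ ∑ _j : Fin s, k :=
        sum_le_sum_of_subset_of_nonneg (subset_univ _) (fun _ _ _ => Nat.zero_le _) |>.trans'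
          (sum_le_sum fun j _ => card_image_le.trans (card_fin k).le)
    _ = k * s := by simp [mul_comm]

theorem priorEdges_congr {T T' : Fin s → Fin k → Fin n} {i : Fin s}
    (h : ∀ j < i, T' j = T j) : priorEdges T' i = priorEdges T i :=
  biUnion_congr rfl fun j hj => by rw [h j (mem_filter.mp hj).2]

theorem mem_tprof_of_mem_tprofOv {b : ℕ} {π : ℕ → ℕ} {L : Fin s → ℕ}
    {T T' : Fin s → Fin k → Fin n} {i : Fin s} (hT' : T' ∈ TprofOv n b k s π L)
    (h : ∀ j < i, T' j = T j) :
    T' i ∈ Tprof n b k π ∧ (0 < (i : ℕ) → #(edgeFinset (T' i) ∩ priorEdges T i) = L i) :=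
  ⟨hT'.1 i, fun hi => priorEdges_congr h ▸ hT'.2 i hi⟩

theorem prod_ite_overlap_eq {s : ℕ} (hs : 1 ≤ s) (L f : Fin s → ℕ) (a : ℕ) :
    ∏ i : Fin s, (if 0 < (i : ℕ) ∧ 1 ≤ L i then f i else a) =
      a * (∏ _i ∈ univ.filter fun i : Fin s => 0 < (i : ℕ) ∧ L i = 0, a) *
        ∏ i ∈ univ.filter fun i : Fin s => 0 < (i : ℕ) ∧ 1 ≤ L i, f i := by
  have hsplit : (univ.filter fun i : Fin s => ¬(0 < (i : ℕ) ∧ 1 ≤ L i)) =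
      insert ⟨0, hs⟩ (univ.filter fun i : Fin s => 0 < (i : ℕ) ∧ L i = 0) := by
    ext i
    simp only [mem_filter, mem_univ, true_and, mem_insert, Fin.ext_iff]
    omega
  rw [prod_ite, hsplit, prod_insert (by simp)]
  ring

end Overlap

theorem stmt6_general (k n b : ℕ) (hk : 1 ≤ k) (hb : IsBandwidth n b)
    (π : ℕ → ℕ)
    (hodd : ∃ i : ℕ, Odd i ∧ i ≤ k ∧ π i ≠ 0)
    (s : ℕ) (hs : 2 ≤ s) (L : Fin s → ℕ) :
    Nat.card (TprofOv n b k s π L) ≤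
      k ^ k * n * b ^ ((∑ m ∈ Finset.Icc 1 k, π m) - 1) *
      (∏ i ∈ Finset.univ.filter fun i : Fin s => 0 < (i : ℕ) ∧ L i = 0,
        k ^ k * n * b ^ ((∑ m ∈ Finset.Icc 1 k, π m) - 1)) *
      (∏ i ∈ Finset.univ.filter fun i : Fin s => 0 < (i : ℕ) ∧ 1 ≤ L i,
        (2 * k) ^ k * k * (k * s) ^ (L i) * b ^ ((∑ m ∈ Finset.Icc 1 k, π m) - L i)) := by
  classical
  have : NeZero k := ⟨by omega⟩
  rw [Nat.card_eq_fintype_card, Fintype.card_subtype, ← prod_ite_overlap_eq (by omega)]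
  refine card_le_prod_of_card_extensions_le _ _ fun i T _ => ?_
  have hext : ∀ t ∈ ((univ.filter fun T' => T' ∈ TprofOv n b k s π L).filter
      fun T' => ∀ j < i, T' j = T j).image (· i),
      t ∈ Tprof n b k π ∧ (0 < (i : ℕ) → #(edgeFinset t ∩ priorEdges T i) = L i) := by
    simp only [mem_image, mem_filter, mem_univ, true_and]
    rintro _ ⟨T', ⟨hT', hagree⟩, rfl⟩
    exact mem_tprof_of_mem_tprofOv hT' hagree
  split_ifs with hi
  · calc _ ≤ #{t : Fin k → Fin n | t ∈ Tprof n b k π ∧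
          #(edgeFinset t ∩ priorEdges T i) = L i} :=
          card_le_card fun t ht =>
            mem_filter.mpr ⟨mem_univ _, (hext t ht).1, (hext t ht).2 hi.1⟩
      _ ≤ _ := card_tprof_sharing_le hb _ hi.2
      _ ≤ (2 * k) ^ k * k * (k * s) ^ L i * b ^ ((∑ m ∈ Icc 1 k, π m) - L i) := by
          gcongr
          exact card_priorEdges_le T i
  · exact (card_le_card fun t ht => mem_filter.mpr ⟨mem_univ _, (hext t ht).1⟩).trans
      (card_tprof_le hb hodd)

/-- Counting bound for families of tuples with prescribed edge overlaps
(Lemma on overlap set counts). -/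
theorem stmt6 (k n b : ℕ) (hk : 1 ≤ k) (hn : 1 ≤ n) (hb : IsBandwidth n b)
    (π : ℕ → ℕ) (hπ : IsProfile k π)
    (hodd : ∃ i : ℕ, Odd i ∧ i ≤ k ∧ π i ≠ 0)
    (s : ℕ) (hs : 2 ≤ s) (L : Fin s → ℕ)
    (hL : ∀ i : Fin s, 0 < (i : ℕ) → L i ≤ ∑ m ∈ Finset.Icc 1 k, π m)
    (hLne : ∃ i : Fin s, 0 < (i : ℕ) ∧ L i ≠ 0) :
    Nat.card (TprofOv n b k s π L) ≤
      k ^ k * n * b ^ ((∑ m ∈ Finset.Icc 1 k, π m) - 1) *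
      (∏ i ∈ Finset.univ.filter fun i : Fin s => 0 < (i : ℕ) ∧ L i = 0,
        k ^ k * n * b ^ ((∑ m ∈ Finset.Icc 1 k, π m) - 1)) *
      (∏ i ∈ Finset.univ.filter fun i : Fin s => 0 < (i : ℕ) ∧ 1 ≤ L i,
        (2 * k) ^ k * k * (k * s) ^ (L i) * b ^ ((∑ m ∈ Finset.Icc 1 k, π m) - L i)) :=
  stmt6_general k n b hk hb π hodd s hs L
end
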